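/- arXiv:2105.12345 — 9 statements merged into one kernel-verified Lean document; each statement's English description precedes it below -/
import Mathlib

section
/- Let G be an additive abelian group and let f : G → ℝ be a real-valued positive definite function with f(0) = 1. Then for every q ≥ 1 and all y_1, …, y_q ∈ G, one has 1 − f(y_1 + ⋯ + y_q) ≤ ∑_{j=1}^q 2^j (1 − f(y_j)). -/
open scoped BigOperators

/-
Testing positive definiteness on the points `0, a, a + b` with weights `1, -2, 1` gives
`1 - f (a + b) ≤ 2 (1 - f a) + 2 (1 - f b)`, i.e. `φ = 1 - f` is subadditive up to a factor 2.
Splitting `y₁ + ⋯ + y_q` as `y₁ + (y₂ + ⋯ + y_q)` and inducting on `q` then doubles the weight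
of each further summand.
-/

/-- A function `f : G → ℂ` on an additive abelian group is positive definite if every
quadratic form `∑ cᵢ c̄ⱼ f(yᵢ - yⱼ)` is a nonnegative real number. -/
def IsPositiveDefinite {G : Type*} [AddCommGroup G] (f : G → ℂ) : Prop :=
  ∀ (n : ℕ) (y : Fin n → G) (c : Fin n → ℂ),
    ∃ t : ℝ, 0 ≤ t ∧ ∑ i, ∑ j, c i * (starRingEnd ℂ) (c j) * f (y i - y j) = (t : ℂ)

theorem apply_sum_le_of_le_two_mul_add {M : Type*} [AddCommMonoid M] (φ : M → ℝ)
    (h0 : φ 0 = 0) (hadd : ∀ a b, φ (a + b) ≤ 2 * φ a + 2 * φ b) :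
    ∀ (q : ℕ) (y : Fin q → M), φ (∑ j, y j) ≤ ∑ j : Fin q, (2 : ℝ) ^ ((j : ℕ) + 1) * φ (y j)
  | 0, _ => by simp [h0]
  | q + 1, y => by
    have ih := apply_sum_le_of_le_two_mul_add φ h0 hadd q (fun j => y j.succ)
    calc φ (∑ j, y j) = φ (y 0 + ∑ j : Fin q, y j.succ) := by rw [Fin.sum_univ_succ]
      _ ≤ 2 * φ (y 0) + 2 * φ (∑ j : Fin q, y j.succ) := hadd _ _
      _ ≤ 2 * φ (y 0) + 2 * ∑ j : Fin q, (2 : ℝ) ^ ((j : ℕ) + 1) * φ (y j.succ) := by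
        gcongr
      _ = ∑ j : Fin (q + 1), (2 : ℝ) ^ ((j : ℕ) + 1) * φ (y j) := by
        simp only [Fin.sum_univ_succ, Fin.val_zero, Fin.val_succ, Finset.mul_sum]
        ring_nf

namespace IsPositiveDefinite

variable {G : Type*} [AddCommGroup G] {f : G → ℝ}

theorem apply_neg_of_real (hpd : IsPositiveDefinite fun g => (f g : ℂ)) (a : G) :
    f (-a) = f a := by
  obtain ⟨t, -, h⟩ := hpd 2 ![0, a] ![1, Complex.I]
  have him : -f (-a) + f a = 0 := by simpa [Fin.sum_univ_two] using congrArg Complex.im h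
  linarith

theorem one_sub_apply_add_le_of_real (hpd : IsPositiveDefinite fun g => (f g : ℂ))
    (hf0 : f 0 = 1) (a b : G) :
    1 - f (a + b) ≤ 2 * (1 - f a) + 2 * (1 - f b) := by
  obtain ⟨t, ht, h⟩ := hpd 3 ![0, a, a + b] ![1, -2, 1]
  have hquad : 6 - 4 * f a - 4 * f b + 2 * f (a + b) = t := by
    have hre := congrArg Complex.re h
    simp only [Fin.sum_univ_three, Fin.isValue, Matrix.cons_val_zero, map_one, mul_one, sub_zero,
      Matrix.cons_val_one, map_neg, mul_neg, neg_mul, Matrix.cons_val, hf0, Complex.ofReal_one,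
      one_mul, zero_sub, hpd.apply_neg_of_real, sub_self, neg_neg, sub_add_cancel_left,
      add_sub_cancel_left, Complex.add_re, Complex.one_re, Complex.neg_re, Complex.mul_re,
      Complex.conj_re, Complex.re_ofNat, Complex.ofReal_re, Complex.conj_im, Complex.im_ofNat,
      neg_zero, Complex.ofReal_im, mul_zero] at hre
    linarith
  linarith

end IsPositiveDefinite

theorem posdef_sum_inequality_general
    {G : Type*} [AddCommGroup G] (f : G → ℝ)
    (hpd : IsPositiveDefinite (fun g => (f g : ℂ))) (hf0 : f 0 = 1)
    (q : ℕ) (y : Fin q → G) :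
    1 - f (∑ j, y j) ≤ ∑ j : Fin q, (2 : ℝ) ^ ((j : ℕ) + 1) * (1 - f (y j)) :=
  apply_sum_le_of_le_two_mul_add (fun g => 1 - f g) (by simp [hf0])
    (hpd.one_sub_apply_add_le_of_real hf0) q y

/-- Inequality (8) of the paper: for a real-valued positive definite function `f`
with `f(0) = 1`, one has `1 - f(y₁ + ⋯ + y_q) ≤ ∑_{j=1}^q 2^j (1 - f(yⱼ))`. -/
theorem posdef_sum_inequality
    {G : Type*} [AddCommGroup G] (f : G → ℝ)
    (hpd : IsPositiveDefinite (fun g => (f g : ℂ))) (hf0 : f 0 = 1)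
    (q : ℕ) (hq : 1 ≤ q) (y : Fin q → G) :
    1 - f (∑ j, y j) ≤ ∑ j : Fin q, (2 : ℝ) ^ ((j : ℕ) + 1) * (1 - f (y j)) :=
  posdef_sum_inequality_general f hpd hf0 q y
end

section
/- Let p be a prime number and let F = {i/p^n : i ∈ ℤ, n ∈ ℕ} be the additive subgroup of ℚ of rationals with p-power denominators. Let m be a power of p with m > 2. Let g : F → ℝ be a positive definite function with g(0) = 1, 0 ≤ g(r) ≤ 1 for all r ∈ F, g(1) > 0, and g(m·r) ≤ g(r)^m for all r ∈ F. Set C = −log g(1). Then for all natural numbers s and k and every integer i with 0 < i < m^k and i/m^k < 1/m^s, one has 1 − g(i/m^k) ≤ (C·2^{m+1}/(m − 2))·(1/m^s). Consequently, g is uniformly continuous on F with respect to the metric induced from ℝ. -/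
open scoped BigOperators

theorem pow_nsmul_add_eq {G : Type*} [AddCommGroup G] {m : ℕ} {u : ℕ → G}
    (hu : ∀ n, m • u (n + 1) = u n) (n L : ℕ) : m ^ L • u (n + L) = u n := by
  induction L with
  | zero => simp
  | succ L ih => rw [pow_succ', mul_nsmul, ← add_assoc, hu, ih]

namespace IsPositiveDefinite

section AddCommGroup

variable {G : Type*} [AddCommGroup G] {g : G → ℝ}

theorem apply_neg (hpd : IsPositiveDefinite (fun x => (g x : ℂ))) (x : G) : g (-x) = g x := by
  obtain ⟨t, -, ht⟩ := hpd 2 ![0, x] ![1, Complex.I]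
  simpa [Fin.sum_univ_two, neg_add_eq_zero] using congrArg Complex.im ht

theorem quadratic_form_nonneg (hpd : IsPositiveDefinite (fun x => (g x : ℂ))) (a b : G)
    (u v w : ℝ) :
    0 ≤ (u ^ 2 + v ^ 2 + w ^ 2) * g 0 +
      2 * (g a * (u * v) + g b * (u * w) + g (b - a) * (v * w)) := by
  obtain ⟨t, ht, heq⟩ := hpd 3 ![0, a, b] ![(u : ℂ), v, w]
  simp only [Fin.sum_univ_three, Matrix.cons_val_zero, Matrix.cons_val_one, Matrix.cons_val_two,
    Matrix.head_cons, Matrix.tail_cons, Complex.conj_ofReal, sub_zero, zero_sub, sub_self] at heq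
  rw [hpd.apply_neg, hpd.apply_neg, ← neg_sub b a, hpd.apply_neg] at heq
  norm_cast at heq
  nlinarith

theorem one_sub_apply_add_le (hpd : IsPositiveDefinite (fun x => (g x : ℂ))) (hg0 : g 0 = 1)
    (x y : G) : 1 - g (x + y) ≤ 2 * (1 - g x) + 2 * (1 - g y) := by
  have := hpd.quadratic_form_nonneg x (x + y) 1 (-(g x + g y)) 1
  rw [hg0, add_sub_cancel_left] at this
  nlinarith [sq_nonneg (g x + g y - 2)]

theorem sq_sub_le (hpd : IsPositiveDefinite (fun x => (g x : ℂ))) (hg0 : g 0 = 1) (x y : G) :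
    (g x - g y) ^ 2 ≤ 2 * (1 - g (y - x)) := by
  have := hpd.quadratic_form_nonneg x y (g y - g x) 1 (-1)
  rw [hg0] at this
  nlinarith

theorem one_sub_apply_nsmul_le (hpd : IsPositiveDefinite (fun x => (g x : ℂ))) (hg0 : g 0 = 1)
    (a : ℕ) (x : G) : 1 - g (a • x) ≤ (2 ^ (a + 1) - 2) * (1 - g x) := by
  induction a with
  | zero => simp [hg0]
  | succ a ih =>
    rw [succ_nsmul, pow_succ]
    linarith [hpd.one_sub_apply_add_le hg0 (a • x) x]

variable {m : ℕ} {u : ℕ → G}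

theorem one_sub_apply_nsmul_le_of_lt_pow (hpd : IsPositiveDefinite (fun x => (g x : ℂ)))
    (hg0 : g 0 = 1) (hm : 2 < m) (hu : ∀ n, m • u (n + 1) = u n) {c : ℝ} (hc : 0 ≤ c)
    (hu_le : ∀ n, 1 - g (u n) ≤ c / m ^ n) (L : ℕ) :
    ∀ i n : ℕ, i < m ^ L →
      1 - g (i • u (n + L)) ≤ c * 2 ^ (m + 1) / (m - 2) * (1 / (m : ℝ) ^ n) := by
  have hm2 : (0 : ℝ) < m - 2 := by
    rw [sub_pos]; exact_mod_cast hm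
  set K := c * 2 ^ (m + 1) / ((m : ℝ) - 2)
  have hK : K * (m - 2) = c * 2 ^ (m + 1) := div_mul_cancel₀ _ hm2.ne'
  induction L with
  | zero =>
    intro i n hi
    obtain rfl : i = 0 := by simpa using hi
    simp only [zero_nsmul, hg0, sub_self]
    positivity
  | succ L ih =>
    intro i n hi
    obtain ⟨a, r, ha, hr, rfl⟩ : ∃ a r, a < m ∧ r < m ^ L ∧ i = m ^ L * a + r :=
      ⟨i / m ^ L, i % m ^ L, Nat.div_lt_of_lt_mul (by rwa [← pow_succ]),
        Nat.mod_lt _ (by positivity), (Nat.div_add_mod _ _).symm⟩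
    have hsplit : (m ^ L * a + r) • u (n + (L + 1)) = a • u (n + 1) + r • u (n + 1 + L) := by
      rw [add_nsmul, mul_nsmul, show n + (L + 1) = n + 1 + L by ring, pow_nsmul_add_eq hu]
    have hdigit : (2 ^ (a + 1) - 2) * c * 2 ≤ K * (m - 2) := by
      have : (2 : ℝ) ^ (a + 1) ≤ 2 ^ m := pow_le_pow_right₀ (by norm_num) ha
      rw [hK, pow_succ 2 m]
      nlinarith [mul_le_mul_of_nonneg_left this hc]
    have h2a : (0 : ℝ) ≤ 2 ^ (a + 1) - 2 := by
      rw [sub_nonneg]; exact le_self_pow₀ (by norm_num) (by omega)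
    rw [hsplit]
    calc 1 - g (a • u (n + 1) + r • u (n + 1 + L))
        ≤ 2 * (1 - g (a • u (n + 1))) + 2 * (1 - g (r • u (n + 1 + L))) :=
          hpd.one_sub_apply_add_le hg0 _ _
      _ ≤ 2 * ((2 ^ (a + 1) - 2) * (c / m ^ (n + 1))) + 2 * (K * (1 / m ^ (n + 1))) := by
          gcongr
          · exact (hpd.one_sub_apply_nsmul_le hg0 a _).trans (by gcongr; exact hu_le _)
          · exact ih r (n + 1) hr
      _ = (2 * (2 ^ (a + 1) - 2) * c + 2 * K) / m ^ (n + 1) := by ring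
      _ ≤ K * m / m ^ (n + 1) := by gcongr; linarith
      _ = K * (1 / m ^ n) := by
          rw [pow_succ]
          field_simp

theorem one_sub_apply_nsmul_le_of_mul_pow_lt (hpd : IsPositiveDefinite (fun x => (g x : ℂ)))
    (hg0 : g 0 = 1) (hm : 2 < m) (hu : ∀ n, m • u (n + 1) = u n) {c : ℝ} (hc : 0 ≤ c)
    (hu_le : ∀ n, 1 - g (u n) ≤ c / m ^ n) {i n k : ℕ} (h : i * m ^ n < m ^ k) :
    1 - g (i • u k) ≤ c * 2 ^ (m + 1) / (m - 2) * (1 / (m : ℝ) ^ n) := by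
  rcases Nat.eq_zero_or_pos i with rfl | hi
  · simpa using hpd.one_sub_apply_nsmul_le_of_lt_pow hg0 hm hu hc hu_le 0 0 n (by simp)
  have hnk : n ≤ k :=
    ((Nat.pow_lt_pow_iff_right (by omega)).1 ((Nat.le_mul_of_pos_left _ hi).trans_lt h)).le
  obtain ⟨L, rfl⟩ := Nat.exists_eq_add_of_le hnk
  refine hpd.one_sub_apply_nsmul_le_of_lt_pow hg0 hm hu hc hu_le L i n ?_
  rw [pow_add, mul_comm (m ^ n)] at h
  exact Nat.lt_of_mul_lt_mul_right h

end AddCommGroup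

theorem uniformContinuous_of_continuousAt_zero {G : Type*}
    [SeminormedAddCommGroup G] {g : G → ℝ} (hpd : IsPositiveDefinite (fun x => (g x : ℂ)))
    (hg0 : g 0 = 1) (hg : ContinuousAt g 0) : UniformContinuous g := by
  rw [Metric.uniformContinuous_iff]
  intro ε hε
  obtain ⟨δ, hδ, hgδ⟩ := Metric.continuousAt_iff.1 hg (ε ^ 2 / 2) (by positivity)
  refine ⟨δ, hδ, fun {x y} hxy => ?_⟩
  have hyx : |g (y - x) - 1| < ε ^ 2 / 2 := by
    simpa [hg0, Real.dist_eq] using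
      hgδ (x := y - x) (by rwa [dist_zero_right, ← dist_eq_norm, dist_comm])
  have := hpd.sq_sub_le hg0 x y
  rw [Real.dist_eq]
  exact abs_lt_of_sq_lt_sq (by linarith [neg_abs_le (g (y - x) - 1)]) hε.le

end IsPositiveDefinite

theorem le_apply_pow_of_apply_nsmul_le_pow {G : Type*} [AddCommGroup G] {g : G → ℝ} {m : ℕ}
    {u : ℕ → G} (hg : ∀ x, 0 ≤ g x) (hgm : ∀ x, g (m • x) ≤ g x ^ m)
    (hu : ∀ n, m • u (n + 1) = u n) (n : ℕ) : g (u 0) ≤ g (u n) ^ m ^ n := by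
  induction n with
  | zero => simp
  | succ n ih =>
    calc g (u 0) ≤ g (u n) ^ m ^ n := ih
      _ ≤ (g (u (n + 1)) ^ m) ^ m ^ n := by rw [← hu]; gcongr; exacts [hg _, hgm _]
      _ = g (u (n + 1)) ^ m ^ (n + 1) := by rw [← pow_mul, pow_succ']

theorem one_sub_le_neg_log_div {y b : ℝ} {N : ℕ} (hN : N ≠ 0) (hy : 0 ≤ y) (hb : 0 < b)
    (h : b ≤ y ^ N) : 1 - y ≤ -Real.log b / N := by
  have hy : 0 < y := hy.lt_of_ne (by rintro rfl; rw [zero_pow hN] at h; linarith)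
  have hN' : (0 : ℝ) < N := by positivity
  rw [le_div_iff₀ hN']
  have := Real.log_le_log hb h
  rw [Real.log_pow] at this
  nlinarith [Real.log_le_sub_one_of_pos hy]

theorem mul_pow_lt_pow_of_div_lt {K : Type*} [Field K] [LinearOrder K] [IsStrictOrderedRing K]
    {m i n s : ℕ} (hm : 0 < m) (h : (i : K) / m ^ n < 1 / m ^ s) : i * m ^ s < m ^ n := by
  rw [div_lt_div_iff₀ (by positivity) (by positivity), one_mul] at h
  exact_mod_cast h

theorem exists_mul_one_div_pow_lt (K : ℝ) {m : ℕ} (hm : 1 < m) {ε : ℝ} (hε : 0 < ε) :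
    ∃ s : ℕ, K * (1 / (m : ℝ) ^ s) < ε := by
  have h := (tendsto_pow_atTop_nhds_zero_of_lt_one (r := 1 / (m : ℝ)) (by positivity)
    ((div_lt_one (by positivity)).2 (by exact_mod_cast hm))).const_mul K
  rw [mul_zero] at h
  simpa only [one_div_pow] using (h.eventually (gt_mem_nhds hε)).exists

theorem continuousAt_zero_of_forall_pos_lt {F : AddSubgroup ℚ} {g : F → ℝ}
    (hneg : ∀ x, g (-x) = g x) (hle : ∀ x, g x ≤ 1) (hg0 : g 0 = 1)
    (h : ∀ ε > 0, ∃ δ > 0, ∀ x : F, 0 < (x : ℚ) → ((x : ℚ) : ℝ) < δ → 1 - g x < ε) :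
    ContinuousAt g 0 := by
  rw [Metric.continuousAt_iff]
  intro ε hε
  obtain ⟨δ, hδ, hx⟩ := h ε hε
  refine ⟨δ, hδ, fun {x} hxδ => ?_⟩
  rw [hg0, Real.dist_eq, abs_sub_comm, abs_of_nonneg (by linarith [hle x])]
  rw [Subtype.dist_eq, Rat.dist_eq, AddSubgroup.coe_zero, Rat.cast_zero, sub_zero, abs_lt] at hxδ
  rcases lt_trichotomy (x : ℚ) 0 with hx_neg | hx_zero | hx_pos
  · rw [← hneg x]
    exact hx (-x) (by simpa using hx_neg) (by push_cast; linarith)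
  · obtain rfl : x = 0 := Subtype.ext hx_zero
    simpa [hg0] using hε
  · exact hx x hx_pos hxδ.2

theorem exists_nat_div_pow_pow_eq {p t : ℕ} (hp : p ≠ 0) (ht : t ≠ 0) {x : ℚ} (hx : 0 ≤ x)
    {j : ℤ} {n : ℕ} (hxj : x = j / (p : ℚ) ^ n) : ∃ i : ℕ, x = i / ((p : ℚ) ^ t) ^ n := by
  have hpn : (0 : ℚ) < (p : ℚ) ^ n := by positivity
  lift j to ℕ using by
    have := mul_nonneg hx hpn.le
    rw [hxj, div_mul_cancel₀ _ hpn.ne'] at this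
    exact_mod_cast this
  refine ⟨j * p ^ ((t - 1) * n), ?_⟩
  have htn : (p : ℚ) ^ (t * n) = p ^ ((t - 1) * n) * p ^ n := by
    rw [← pow_add]; congr 1
    obtain ⟨t, rfl⟩ := Nat.exists_eq_succ_of_ne_zero ht
    simp [Nat.succ_mul]
  rw [hxj, ← pow_mul, htn]
  push_cast
  field_simp

/-- The continuity estimate (inequality (12)) in the proof of the main theorem: on the
group `F` of rationals with `p`-power denominators, a positive definite function `g` with
`g(0) = 1`, `0 ≤ g ≤ 1`, `g(1) > 0` and `g(m r) ≤ g(r)^m` (for a power `m > 2` of `p`)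
satisfies `1 - g(i/mᵏ) ≤ (C 2^{m+1}/(m-2)) (1/mˢ)` whenever `0 < i < mᵏ` and
`i/mᵏ < 1/mˢ`; consequently `g` is uniformly continuous in the metric of `ℝ`. -/
theorem posdef_continuity_estimate
    (p : ℕ) (hp : p.Prime)
    (F : AddSubgroup ℚ)
    (hF : ∀ x : ℚ, x ∈ F ↔ ∃ (i : ℤ) (n : ℕ), x = (i : ℚ) / (p : ℚ) ^ n)
    (m t : ℕ) (hmp : m = p ^ t) (hm2 : 2 < m)
    (g : F → ℝ)
    (hpd : IsPositiveDefinite (fun r => (g r : ℂ))) (hg0 : g 0 = 1)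
    (hrange : ∀ r : F, 0 ≤ g r ∧ g r ≤ 1)
    (h1F : (1 : ℚ) ∈ F) (hg1 : 0 < g ⟨1, h1F⟩)
    (hgm : ∀ r : F, g (m • r) ≤ (g r) ^ m)
    (C : ℝ) (hC : C = -Real.log (g ⟨1, h1F⟩))
    (hmem : ∀ (i : ℤ) (k : ℕ), ((i : ℚ) / (m : ℚ) ^ k) ∈ F) :
    (∀ (s k : ℕ) (i : ℤ), 0 < i → (i : ℚ) < (m : ℚ) ^ k →
        (i : ℚ) / (m : ℚ) ^ k < 1 / (m : ℚ) ^ s →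
        1 - g ⟨(i : ℚ) / (m : ℚ) ^ k, hmem i k⟩ ≤
          C * 2 ^ (m + 1) / (m - 2) * (1 / (m : ℝ) ^ s)) ∧
      UniformContinuous g := by
  have hm0 : m ≠ 0 := by omega
  set u : ℕ → F := fun n => ⟨((1 : ℤ) : ℚ) / (m : ℚ) ^ n, hmem 1 n⟩
  have hnsmul (i k : ℕ) : i • u k = ⟨((i : ℤ) : ℚ) / (m : ℚ) ^ k, hmem i k⟩ :=
    Subtype.ext (by simp [u, div_eq_mul_inv])
  have hu (n : ℕ) : m • u (n + 1) = u n := by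
    rw [hnsmul]; exact Subtype.ext (by simp only [Int.cast_natCast, Int.cast_one, pow_succ, u]; field_simp)
  have hC0 : 0 ≤ C := hC ▸ neg_nonneg.2 (Real.log_nonpos (hrange _).1 (hrange _).2)
  have hu_le (n : ℕ) : 1 - g (u n) ≤ C / m ^ n := by
    have hu0 : u 0 = ⟨1, h1F⟩ := Subtype.ext (by simp [u])
    have := one_sub_le_neg_log_div (pow_ne_zero n hm0) (hrange _).1 hg1
      (hu0 ▸ le_apply_pow_of_apply_nsmul_le_pow (fun r => (hrange r).1) hgm hu n)
    rw [hC]; exact_mod_cast this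
  have hbound {i k s : ℕ} (h : i * m ^ s < m ^ k) :=
    hpd.one_sub_apply_nsmul_le_of_mul_pow_lt hg0 hm2 hu hC0 hu_le h
  refine ⟨fun s k i hi _ his => ?_, hpd.uniformContinuous_of_continuousAt_zero hg0
    (continuousAt_zero_of_forall_pos_lt hpd.apply_neg (fun r => (hrange r).2) hg0 fun ε hε => ?_)⟩
  · lift i to ℕ using hi.le
    rw [← hnsmul]
    exact hbound (mul_pow_lt_pow_of_div_lt (Nat.pos_of_ne_zero hm0) his)
  · obtain ⟨s, hs⟩ :=
      exists_mul_one_div_pow_lt (C * 2 ^ (m + 1) / (m - 2)) (one_lt_two.trans hm2) hε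
    refine ⟨1 / m ^ s, by positivity, fun x hx hxs => ?_⟩
    obtain ⟨j, n, hxj⟩ := (hF x).1 x.2
    obtain ⟨i, hxi⟩ := exists_nat_div_pow_pow_eq (t := t) hp.ne_zero
      (fun ht => by rw [ht, pow_zero] at hmp; omega) hx.le hxj
    rw [← Nat.cast_pow, ← hmp] at hxi
    obtain rfl : x = i • u n := by rw [hnsmul]; exact Subtype.ext (by simp [hxi])
    refine (hbound (mul_pow_lt_pow_of_div_lt (K := ℝ) (Nat.pos_of_ne_zero hm0) ?_)).trans_lt hs
    simpa [hxi] using hxs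
end

section
/- Let p be a prime number and let E be a nontrivial additive subgroup of ℚ such that for every y ∈ ℚ, if p·y ∈ E then y ∈ E. Then there exists a sequence b = (b_0, b_1, b_2, …) of integers with b_j > 1 for all j such that E is isomorphic as an abstract abelian group to H_b. -/
/-!
After rescaling by a nonzero element we may assume `1 ∈ E`. Then, by Bézout, `1 / den x ∈ E` for
every `x ∈ E`, and the denominators `d` with `1 / d ∈ E` are closed under `lcm` and, by the
hypothesis, under multiplication by `p`. Enumerating `E` as `x₀, x₁, …` and putting `B₀ = 1`,
`Bₙ₊₁ = p · lcm (Bₙ, den xₙ)` yields a divisor chain with `1 / Bₙ ∈ E` that absorbs every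
denominator of `E`, so `E = ⋃ ℤ / Bₙ = H_b` for `bₙ = Bₙ₊₁ / Bₙ`; the factor `p` makes `bₙ > 1`.
-/

open scoped BigOperators

/-- For a sequence `b` of integers `> 1`, `Hgrp b hb` is the additive subgroup of `ℚ`
consisting of all rationals of the form `m / (b 0 * b 1 * ⋯ * b n)` with `m ∈ ℤ`, `n ∈ ℕ`. -/
def Hgrp (b : ℕ → ℤ) (hb : ∀ j, 1 < b j) : AddSubgroup ℚ where
  carrier := {x : ℚ | ∃ (m : ℤ) (n : ℕ),
    x = (m : ℚ) / ∏ j ∈ Finset.range (n + 1), (b j : ℚ)}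
  zero_mem' := ⟨0, 0, by simp⟩
  neg_mem' := by
    rintro x ⟨m, n, rfl⟩
    exact ⟨-m, n, by push_cast; ring⟩
  add_mem' := by
    have hne : ∀ s : Finset ℕ, (∏ j ∈ s, (b j : ℚ)) ≠ 0 := by
      intro s
      refine Finset.prod_ne_zero_iff.mpr fun j _ => ?_
      have := hb j
      exact_mod_cast (by omega : b j ≠ 0)
    have key : ∀ (m m' : ℤ) (n k : ℕ), n ≤ k →
        ((m : ℚ) / ∏ j ∈ Finset.range (n + 1), (b j : ℚ)) +
          ((m' : ℚ) / ∏ j ∈ Finset.range (k + 1), (b j : ℚ)) ∈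
        {x : ℚ | ∃ (m : ℤ) (n : ℕ),
          x = (m : ℚ) / ∏ j ∈ Finset.range (n + 1), (b j : ℚ)} := by
      intro m m' n k hnk
      refine ⟨m * ∏ j ∈ Finset.Ico (n + 1) (k + 1), b j + m', k, ?_⟩
      have hsplit : (∏ j ∈ Finset.range (k + 1), (b j : ℚ)) =
          (∏ j ∈ Finset.range (n + 1), (b j : ℚ)) *
            ∏ j ∈ Finset.Ico (n + 1) (k + 1), (b j : ℚ) := by
        simp only [Finset.range_eq_Ico]
        exact (Finset.prod_Ico_consecutive (fun j => (b j : ℚ))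
          (Nat.zero_le (n + 1)) (by omega)).symm
      have h1 := hne (Finset.range (n + 1))
      have h2 := hne (Finset.Ico (n + 1) (k + 1))
      rw [hsplit]
      push_cast
      field_simp
    rintro x y ⟨m, n, rfl⟩ ⟨m', k, rfl⟩
    rcases le_total n k with h | h
    · exact key m m' n k h
    · have := key m' m k n h
      rwa [add_comm] at this

open Finset

theorem mem_Hgrp {b : ℕ → ℤ} {hb : ∀ j, 1 < b j} {x : ℚ} :
    x ∈ Hgrp b hb ↔ ∃ (m : ℤ) (n : ℕ), x = m / ∏ j ∈ range (n + 1), (b j : ℚ) :=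
  Iff.rfl

section

variable {E : AddSubgroup ℚ}

theorem inv_den_mem_of_one_mem (h1 : (1 : ℚ) ∈ E) {x : ℚ} (hx : x ∈ E) : (x.den : ℚ)⁻¹ ∈ E := by
  obtain ⟨u, v, huv⟩ := x.isCoprime_num_den
  have huv' : (u * x.num + v * x.den : ℚ) = 1 := by exact_mod_cast huv
  have hinv : (x.den : ℚ)⁻¹ = u • x + v • (1 : ℚ) := by
    rw [zsmul_eq_mul, zsmul_eq_mul, mul_one]
    refine (eq_inv_of_mul_eq_one_left ?_).symm
    linear_combination (u : ℚ) * x.mul_den_eq_num + huv'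
  rw [hinv]
  exact add_mem (zsmul_mem hx u) (zsmul_mem h1 v)

theorem inv_lcm_mem {a b : ℕ} (ha : (a : ℚ)⁻¹ ∈ E) (hb : (b : ℚ)⁻¹ ∈ E) :
    ((a.lcm b : ℕ) : ℚ)⁻¹ ∈ E := by
  rcases eq_or_ne a 0 with rfl | ha0
  · simp
  rcases eq_or_ne b 0 with rfl | hb0
  · simp
  have hgl : ((a.gcd b : ℕ) : ℚ) * (a.lcm b : ℕ) = a * b := by exact_mod_cast Nat.gcd_mul_lcm a b
  have hinv : ((a.lcm b : ℕ) : ℚ)⁻¹ = a.gcdA b • (b : ℚ)⁻¹ + a.gcdB b • (a : ℚ)⁻¹ := by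
    have hl : ((a.lcm b : ℕ) : ℚ) ≠ 0 := by exact_mod_cast Nat.lcm_ne_zero ha0 hb0
    have ha0' : (a : ℚ) ≠ 0 := by exact_mod_cast ha0
    have hb0' : (b : ℚ) ≠ 0 := by exact_mod_cast hb0
    have hgcd : ((a.gcd b : ℕ) : ℚ) = a * a.gcdA b + b * a.gcdB b := by
      exact_mod_cast Nat.gcd_eq_gcd_ab a b
    rw [zsmul_eq_mul, zsmul_eq_mul]
    field_simp
    linear_combination (a.lcm b : ℚ) * hgcd - hgl
  rw [hinv]
  exact add_mem (zsmul_mem hb _) (zsmul_mem ha _)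

theorem exists_Hgrp_eq_of_chain (B : ℕ → ℕ) (hB0 : B 0 = 1)
    (hstep : ∀ n, ∃ k, 1 < k ∧ B (n + 1) = B n * k) (hmem : ∀ n, (B n : ℚ)⁻¹ ∈ E)
    (hden : ∀ x ∈ E, ∃ n, x.den ∣ B n) :
    ∃ (b : ℕ → ℤ) (hb : ∀ j, 1 < b j), Hgrp b hb = E := by
  choose k hk1 hBk using hstep
  have hBpos : ∀ n, 0 < B n := by
    intro n
    induction n with
    | zero => simp [hB0]
    | succ n ih => rw [hBk]; exact Nat.mul_pos ih (by have := hk1 n; omega)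
  have hprod : ∀ n, ∏ j ∈ range n, ((k j : ℤ) : ℚ) = B n := by
    intro n
    induction n with
    | zero => simp [hB0]
    | succ n ih => rw [prod_range_succ, ih, hBk]; push_cast; ring
  refine ⟨fun j => k j, fun j => Nat.one_lt_cast.mpr (hk1 j), ?_⟩
  ext x
  simp only [mem_Hgrp, hprod]
  constructor
  · rintro ⟨m, n, rfl⟩
    rw [div_eq_mul_inv, ← zsmul_eq_mul]
    exact zsmul_mem (hmem _) m
  · intro hx
    obtain ⟨n, hn⟩ := hden x hx
    obtain ⟨c, hc⟩ := hn.trans (Dvd.intro _ (hBk n).symm)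
    have hc0 : (x.den * c : ℚ) ≠ 0 := by exact_mod_cast hc ▸ (hBpos (n + 1)).ne'
    refine ⟨x.num * c, n, ?_⟩
    rw [hc, Nat.cast_mul, eq_div_iff hc0]
    push_cast
    linear_combination (c : ℚ) * x.mul_den_eq_num

theorem exists_Hgrp_eq_of_one_mem {p : ℕ} (hp : 1 < p) (h1 : (1 : ℚ) ∈ E)
    (hdiv : ∀ y : ℚ, (p : ℚ) * y ∈ E → y ∈ E) :
    ∃ (b : ℕ → ℤ) (hb : ∀ j, 1 < b j), Hgrp b hb = E := by
  obtain ⟨f, hf⟩ := exists_surjective_nat E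
  let B : ℕ → ℕ := fun n =>
    Nat.rec (motive := fun _ => ℕ) 1 (fun j Bj => p * Bj.lcm (f j : ℚ).den) n
  have hBsucc : ∀ n, B (n + 1) = p * (B n).lcm (f n : ℚ).den := fun n => rfl
  have hBpos : ∀ n, 0 < B n := by
    intro n
    induction n with
    | zero => exact Nat.one_pos
    | succ n ih => rw [hBsucc]; exact Nat.mul_pos (by omega) (Nat.lcm_pos ih (f n : ℚ).den_pos)
  have hBmem : ∀ n, (B n : ℚ)⁻¹ ∈ E := by
    intro n
    induction n with
    | zero => simpa [B] using h1
    | succ n ih =>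
      apply hdiv
      have hp0 : (p : ℚ) ≠ 0 := by positivity
      rw [hBsucc, Nat.cast_mul, mul_inv, ← mul_assoc, mul_inv_cancel₀ hp0, one_mul]
      exact inv_lcm_mem ih (inv_den_mem_of_one_mem h1 (f n).2)
  refine exists_Hgrp_eq_of_chain B rfl (fun n => ?_) hBmem fun x hx => ?_
  · obtain ⟨c, hc⟩ := Nat.dvd_lcm_left (B n) (f n : ℚ).den
    have hc0 : 0 < c := Nat.pos_of_mul_pos_left (hc ▸ Nat.lcm_pos (hBpos n) (f n : ℚ).den_pos)
    exact ⟨p * c, by nlinarith, by rw [hBsucc, hc]; ring⟩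
  · obtain ⟨n, hn⟩ := hf ⟨x, hx⟩
    exact ⟨n + 1, hBsucc n ▸ hn ▸ (Nat.dvd_lcm_right _ _).mul_left p⟩

end

/-- Any nontrivial subgroup `E` of `ℚ` with unique division by a prime `p`
(`p y ∈ E → y ∈ E`) is isomorphic to a group `H_b` of rationals of the form
`m / (b_0 b_1 ⋯ b_n)` for some sequence `b` of integers `b_j > 1`. -/
theorem subgroup_with_p_division_iso_Hgrp
    (p : ℕ) (hp : p.Prime) (E : AddSubgroup ℚ) (hE : E ≠ ⊥)
    (hdiv : ∀ y : ℚ, (p : ℚ) * y ∈ E → y ∈ E) :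
    ∃ (b : ℕ → ℤ) (hb : ∀ j, 1 < b j), Nonempty (E ≃+ Hgrp b hb) := by
  obtain ⟨e, he, he0⟩ := E.bot_or_exists_ne_zero.resolve_left hE
  let φ : ℚ ≃+ ℚ := (LinearEquiv.smulOfNeZero ℚ ℚ e⁻¹ (inv_ne_zero he0)).toAddEquiv
  have hmem : ∀ x, x ∈ E.map φ.toAddMonoidHom ↔ e * x ∈ E := fun x => by
    rw [AddSubgroup.mem_map_equiv]; simp [φ, Units.smul_def]
  obtain ⟨b, hb, hbE⟩ := exists_Hgrp_eq_of_one_mem hp.one_lt (E := E.map φ.toAddMonoidHom)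
    ((hmem 1).mpr (by simpa using he))
    fun y hy => (hmem y).mpr (hdiv _ (by simpa [mul_left_comm] using (hmem _).mp hy))
  exact ⟨b, hb, ⟨(φ.addSubgroupMap E).trans (AddEquiv.addSubgroupCongr hbE.symm)⟩⟩
end

section
/- Let a = (a_0, a_1, a_2, …) be a sequence of integers with a_j > 1 for all j. Then the following are equivalent: (α) there exist n ≥ 2 and nonzero rational numbers r_1, …, r_n with r_j·H_a = H_a for each j and r_1² + ⋯ + r_n² = 1; (γ) there exists a prime number p such that the set {j : p divides a_j} is infinite. -/
open scoped BigOperators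

/-- The image of a subgroup of `ℚ` under multiplication by a rational number. -/
def ratSMul (r : ℚ) (Y : AddSubgroup ℚ) : Set ℚ := (fun y => r * y) '' (Y : Set ℚ)

/-!
`H_a` consists of the rationals whose denominator divides some partial product `a_0 ⋯ a_n`.
If a prime `p` divides infinitely many `a_j`, then `H_a` is `p`-divisible, so `1/p` is an
automorphism and `p²` copies of `(1/p)²` sum to `1`. Otherwise every prime occurs in the partial
products with bounded multiplicity; as `r^t, r^{-t} ∈ H_a` for every automorphism `r`, neither
`r` nor `r⁻¹` can have a nontrivial denominator, so `r = ±1` and `∑ r_j² = n ≥ 2`.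
-/

open Finset

lemma ratSMul_eq_iff {r : ℚ} (hr : r ≠ 0) {Y : AddSubgroup ℚ} :
    ratSMul r Y = Y ↔ (∀ x ∈ Y, r * x ∈ Y) ∧ ∀ x ∈ Y, r⁻¹ * x ∈ Y := by
  refine ⟨fun h => ⟨fun x hx => ?_, fun x hx => ?_⟩, fun ⟨hmul, hmul_inv⟩ => ?_⟩
  · exact (h.subset ⟨x, hx, rfl⟩ :)
  · obtain ⟨y, hy, rfl⟩ := h.superset hx
    simpa [inv_mul_cancel_left₀ hr] using hy
  · refine subset_antisymm (Set.image_subset_iff.mpr hmul) fun x hx =>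
      ⟨r⁻¹ * x, hmul_inv x hx, ?_⟩
    simp [mul_inv_cancel_left₀ hr]

lemma pow_mem_of_mul_mem {r : ℚ} {Y : AddSubgroup ℚ} (hone : (1 : ℚ) ∈ Y)
    (hmul : ∀ x ∈ Y, r * x ∈ Y) (t : ℕ) : r ^ t ∈ Y := by
  induction t with
  | zero => simpa using hone
  | succ t ih => simpa [pow_succ'] using hmul _ ih

def partialProd (a : ℕ → ℤ) (n : ℕ) : ℤ := ∏ j ∈ range (n + 1), a j

lemma partialProd_mul_dvd (a : ℕ → ℤ) {n j : ℕ} (hnj : n < j) :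
    partialProd a n * a j ∣ partialProd a j := by
  have hj : j ∉ range (n + 1) := by rw [mem_range]; omega
  rw [partialProd, mul_comm, ← prod_insert hj]
  exact prod_dvd_prod_of_subset _ _ _ (insert_subset (by simp) (range_subset_range.mpr (by omega)))

/-- Every power of `q` dividing a partial product divides the product of the finitely many `a_j`
that `q` divides, because `q` is coprime to all the other factors. -/
lemma exists_not_pow_dvd_partialProd {a : ℕ → ℤ} (ha : ∀ j, a j ≠ 0) {q : ℤ}
    (hq : Prime q) (hfin : {j | q ∣ a j}.Finite) : ∃ M, ∀ n, ¬ q ^ M ∣ partialProd a n := by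
  set S := hfin.toFinset
  have hN : ∏ j ∈ S, a j ≠ 0 := prod_ne_zero_iff.mpr fun j _ => ha j
  obtain ⟨M, hM⟩ : FiniteMultiplicity q (∏ j ∈ S, a j) :=
    Int.finiteMultiplicity_iff.mpr ⟨fun h => hq.not_isUnit (Int.isUnit_iff_natAbs_eq.mpr h), hN⟩
  refine ⟨M + 1, fun n hdvd => hM ?_⟩
  rw [partialProd, ← prod_filter_mul_prod_filter_not (range (n + 1)) (· ∈ S)] at hdvd
  have hcop : IsCoprime (q ^ (M + 1)) (∏ j ∈ range (n + 1) with j ∉ S, a j) :=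
    IsCoprime.pow_left <| IsCoprime.prod_right fun j hj =>
      (Prime.coprime_iff_not_dvd hq).mpr (by simpa [S] using (mem_filter.mp hj).2)
  exact (hcop.dvd_of_dvd_mul_right hdvd).trans
    (prod_dvd_prod_of_subset _ _ _ fun j hj => (mem_filter.mp hj).2)

section Hgrp

variable {a : ℕ → ℤ} {ha : ∀ j, 1 < a j}

lemma mem_Hgrp_iff_den_dvd {x : ℚ} :
    x ∈ Hgrp a ha ↔ ∃ n, (x.den : ℤ) ∣ partialProd a n := by
  constructor
  · rintro ⟨m, n, rfl⟩
    refine ⟨n, ?_⟩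
    have := Rat.den_dvd m (partialProd a n)
    rwa [← Rat.intCast_div_eq_divInt, partialProd, Int.cast_prod] at this
  · rintro ⟨n, c, hc⟩
    refine ⟨x.num * c, n, ?_⟩
    have hP : partialProd a n ≠ 0 :=
      prod_ne_zero_iff.mpr fun j _ => (zero_lt_one.trans (ha j)).ne'
    have hc0 : (c : ℚ) ≠ 0 := by exact_mod_cast right_ne_zero_of_mul (hc ▸ hP)
    rw [← Int.cast_prod, ← partialProd, hc]
    push_cast
    rw [mul_div_mul_right _ _ hc0, Rat.num_div_den]

lemma inv_natCast_mul_mem_Hgrp {p : ℕ} (hinf : {j | (p : ℤ) ∣ a j}.Infinite) {x : ℚ}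
    (hx : x ∈ Hgrp a ha) : (p : ℚ)⁻¹ * x ∈ Hgrp a ha := by
  obtain ⟨n, hn⟩ := mem_Hgrp_iff_den_dvd.mp hx
  obtain ⟨j, hpj, hnj⟩ := hinf.exists_gt n
  refine mem_Hgrp_iff_den_dvd.mpr ⟨j, ?_⟩
  calc (((p : ℚ)⁻¹ * x).den : ℤ) ∣ (p : ℚ)⁻¹.den * x.den := by
        exact_mod_cast Rat.mul_den_dvd _ _
    _ ∣ a j * partialProd a n := by
      rw [Rat.inv_natCast_den]
      split_ifs
      · simpa using hn.mul_left (a j)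
      · exact mul_dvd_mul hpj hn
    _ ∣ partialProd a j := by rw [mul_comm]; exact partialProd_mul_dvd a hnj

lemma den_eq_one_of_pow_mem_Hgrp (hfin : ∀ p : ℕ, p.Prime → {j | (p : ℤ) ∣ a j}.Finite)
    {r : ℚ} (hr : ∀ t : ℕ, r ^ t ∈ Hgrp a ha) : r.den = 1 := by
  by_contra hden
  obtain ⟨q, hq, hqr⟩ := Nat.exists_prime_and_dvd hden
  obtain ⟨M, hM⟩ := exists_not_pow_dvd_partialProd (fun j => (zero_lt_one.trans (ha j)).ne')
    (Nat.prime_iff_prime_int.mp hq) (hfin q hq)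
  obtain ⟨n, hn⟩ := mem_Hgrp_iff_den_dvd.mp (hr M)
  rw [Rat.den_pow, Nat.cast_pow] at hn
  exact hM n ((pow_dvd_pow_of_dvd (Int.natCast_dvd_natCast.mpr hqr) M).trans hn)

lemma sq_eq_one_of_ratSMul_Hgrp_eq (hfin : ∀ p : ℕ, p.Prime → {j | (p : ℤ) ∣ a j}.Finite)
    {r : ℚ} (hr : r ≠ 0) (h : ratSMul r (Hgrp a ha) = Hgrp a ha) : r ^ 2 = 1 := by
  have hone : (1 : ℚ) ∈ Hgrp a ha := mem_Hgrp_iff_den_dvd.mpr ⟨0, by simp⟩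
  obtain ⟨hmul, hmul_inv⟩ := (ratSMul_eq_iff hr).mp h
  have hr_int := Rat.coe_int_num_of_den_eq_one
    (den_eq_one_of_pow_mem_Hgrp hfin (pow_mem_of_mul_mem hone hmul))
  have hr_inv_int := Rat.coe_int_num_of_den_eq_one
    (den_eq_one_of_pow_mem_Hgrp hfin (pow_mem_of_mul_mem hone hmul_inv))
  have hnum_mul : (r.num * (r⁻¹).num : ℚ) = 1 := by rw [hr_int, hr_inv_int, mul_inv_cancel₀ hr]
  have hunit : IsUnit r.num := IsUnit.of_mul_eq_one (r⁻¹).num (by exact_mod_cast hnum_mul)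
  rw [← hr_int]
  exact_mod_cast Int.isUnit_sq hunit

end Hgrp

/-- Remark 2.3, (α) ⟺ (γ): there exist `n ≥ 2` nonzero rationals `r_j` acting as
automorphisms of `H_a` with `r_1² + ⋯ + r_n² = 1` if and only if some prime `p`
divides infinitely many of the numbers `a_j`. -/
theorem exists_automorphisms_sum_sq_one_iff
    (a : ℕ → ℤ) (ha : ∀ j, 1 < a j) :
    (∃ (n : ℕ), 2 ≤ n ∧ ∃ r : Fin n → ℚ, (∀ j, r j ≠ 0) ∧
        (∀ j, ratSMul (r j) (Hgrp a ha) = (Hgrp a ha : Set ℚ)) ∧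
        ∑ j, (r j) ^ 2 = 1) ↔
      ∃ p : ℕ, p.Prime ∧ {j : ℕ | (p : ℤ) ∣ a j}.Infinite := by
  constructor
  · rintro ⟨n, hn, r, hr0, hrH, hsum⟩
    by_contra! hfin
    have hsq j : r j ^ 2 = 1 := sq_eq_one_of_ratSMul_Hgrp_eq hfin (hr0 j) (hrH j)
    simp only [hsq, sum_const, card_univ, Fintype.card_fin, nsmul_eq_mul, mul_one] at hsum
    exact absurd (by exact_mod_cast hsum : n = 1) (by omega)
  · rintro ⟨p, hp, hinf⟩
    have hp0 : (p : ℚ) ≠ 0 := by exact_mod_cast hp.ne_zero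
    refine ⟨p ^ 2, by nlinarith [hp.two_le], fun _ => (p : ℚ)⁻¹, fun _ => inv_ne_zero hp0,
      fun _ => (ratSMul_eq_iff (inv_ne_zero hp0)).mpr ⟨fun x => inv_natCast_mul_mem_Hgrp hinf,
        fun x hx => by simpa using nsmul_mem hx p⟩, ?_⟩
    simp [field]
end

section
/- Let a = (a_0, a_1, a_2, …) be a sequence of integers with a_j > 1 for all j, and suppose that no prime number divides a_j for infinitely many j. Then the only additive group automorphisms of H_a are the identity map and negation x ↦ −x. -/
/-!
An additive endomorphism of a subgroup `H ≤ ℚ` containing `1` is multiplication by its value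
`q` at `1`, so an automorphism is multiplication by a `q` with `q H = H`. If a prime `p` divided
the denominator of `q`, then writing `q / (a₀ ⋯ a_N) ∈ H_a` as `m / (a₀ ⋯ a_n)` with `n ≥ N` shows
`q = m / (a_{N+1} ⋯ a_n)`, so `p` divides some `a_j` with `j > N`; this is impossible for `N`
beyond the last index at which `p ∣ a_j`. Hence `q` and `q⁻¹` are integers, and `q = ±1`.
-/

open scoped BigOperators

open Finset

theorem AddSubgroup.rat_map_mul_comm {H : AddSubgroup ℚ} (f : H →+ ℚ) (x y : H) :
    f x * y = f y * x := by
  have hxy : ((x : ℚ).den * (y : ℚ).num : ℤ) • x = ((x : ℚ).num * (y : ℚ).den : ℤ) • y := by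
    ext
    simp only [AddSubgroupClass.coe_zsmul, zsmul_eq_mul, Int.cast_mul, Int.cast_natCast]
    rw [← Rat.mul_den_eq_num (x : ℚ), ← Rat.mul_den_eq_num (y : ℚ)]
    ring
  have hf := congrArg f hxy
  simp only [map_zsmul, zsmul_eq_mul, Int.cast_mul, Int.cast_natCast] at hf
  have hx : ((x : ℚ).den : ℚ) ≠ 0 := by positivity
  have hy : ((y : ℚ).den : ℚ) ≠ 0 := by positivity
  rw [← Rat.num_div_den (x : ℚ), ← Rat.num_div_den (y : ℚ)]
  field_simp
  linear_combination hf

theorem AddSubgroup.rat_map_eq_mul {H : AddSubgroup ℚ} (h1 : (1 : ℚ) ∈ H) (f : H →+ ℚ)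
    (x : H) : f x = f ⟨1, h1⟩ * x := by
  simpa using (AddSubgroup.rat_map_mul_comm f ⟨1, h1⟩ x).symm

theorem Rat.eq_one_or_neg_one_of_mul_eq_one {q q' : ℚ} (hq : q.den = 1) (hq' : q'.den = 1)
    (h : q * q' = 1) : q = 1 ∨ q = -1 := by
  rw [← Rat.coe_int_num_of_den_eq_one hq, ← Rat.coe_int_num_of_den_eq_one hq'] at h
  rw [← Rat.coe_int_num_of_den_eq_one hq]
  exact_mod_cast Int.eq_one_or_neg_one_of_mul_eq_one (by exact_mod_cast h)

namespace Hgrp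

variable {a : ℕ → ℤ} {ha : ∀ j, 1 < a j}

theorem prod_ne_zero (ha : ∀ j, 1 < a j) (s : Finset ℕ) : ∏ j ∈ s, (a j : ℚ) ≠ 0 :=
  Finset.prod_ne_zero_iff.mpr fun j _ => by exact_mod_cast (zero_lt_one.trans (ha j)).ne'

theorem one_mem : (1 : ℚ) ∈ Hgrp a ha :=
  ⟨a 0, 0, by simpa using (div_self (prod_ne_zero ha {0})).symm⟩

theorem one_div_prod_mem (N : ℕ) : 1 / ∏ j ∈ range (N + 1), (a j : ℚ) ∈ Hgrp a ha :=
  ⟨1, N, by simp⟩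

theorem exists_eq_div_prod_of_le {x : ℚ} (hx : x ∈ Hgrp a ha) (N : ℕ) :
    ∃ (m : ℤ) (n : ℕ), N ≤ n ∧ x = m / ∏ j ∈ range (n + 1), (a j : ℚ) := by
  obtain ⟨m, n, rfl⟩ := hx
  rcases le_total N n with hNn | hnN
  · exact ⟨m, n, hNn, rfl⟩
  refine ⟨m * ∏ j ∈ Ico (n + 1) (N + 1), a j, N, le_rfl, ?_⟩
  rw [← prod_range_mul_prod_Ico _ (Nat.succ_le_succ hnN), Int.cast_mul, Int.cast_prod,
    mul_div_mul_right _ _ (prod_ne_zero ha _)]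

theorem exists_eq_div_prod_Ico {r : ℚ} (N : ℕ)
    (hr : r / ∏ j ∈ range (N + 1), (a j : ℚ) ∈ Hgrp a ha) :
    ∃ (m : ℤ) (n : ℕ), r = m / ((∏ j ∈ Ico (N + 1) (n + 1), a j : ℤ) : ℚ) := by
  obtain ⟨m, n, hNn, hmn⟩ := exists_eq_div_prod_of_le hr N
  refine ⟨m, n, ?_⟩
  rw [← prod_range_mul_prod_Ico _ (Nat.succ_le_succ hNn), div_eq_iff (prod_ne_zero ha _)] at hmn
  rw [hmn, Int.cast_prod]
  field_simp [prod_ne_zero ha]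

theorem den_eq_one_of_forall_mul_mem (h : ∀ p : ℕ, p.Prime → {j : ℕ | (p : ℤ) ∣ a j}.Finite)
    {r : ℚ} (hr : ∀ x ∈ Hgrp a ha, r * x ∈ Hgrp a ha) : r.den = 1 := by
  by_contra hden
  obtain ⟨p, hp, hpr⟩ := Nat.exists_prime_and_dvd hden
  obtain ⟨N, hN⟩ := (h p hp).bddAbove
  have hrN := hr _ (one_div_prod_mem N)
  rw [mul_one_div] at hrN
  obtain ⟨m, n, rfl⟩ := exists_eq_div_prod_Ico N hrN
  have hpQ : (p : ℤ) ∣ ∏ j ∈ Ico (N + 1) (n + 1), a j := by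
    refine (Int.natCast_dvd_natCast.mpr hpr).trans ?_
    simpa [Rat.divInt_eq_div] using Rat.den_dvd m (∏ j ∈ Ico (N + 1) (n + 1), a j)
  obtain ⟨j, hj, hpj⟩ := (Nat.prime_iff_prime_int.mp hp).dvd_finsetProd_iff _ |>.mp hpQ
  have := hN hpj
  have := (mem_Ico.mp hj).1
  omega

end Hgrp

/-- Remark 2.3 (alternative): if no prime divides infinitely many of the `a_j`, then the
only automorphisms of `H_a` are the identity and negation. -/
theorem aut_Hgrp_eq_pm_id
    (a : ℕ → ℤ) (ha : ∀ j, 1 < a j)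
    (h : ∀ p : ℕ, p.Prime → {j : ℕ | (p : ℤ) ∣ a j}.Finite)
    (e : Hgrp a ha ≃+ Hgrp a ha) :
    (∀ x : Hgrp a ha, (e x : ℚ) = (x : ℚ)) ∨
      (∀ x : Hgrp a ha, (e x : ℚ) = -(x : ℚ)) := by
  set one : Hgrp a ha := ⟨1, Hgrp.one_mem⟩
  have he (x : Hgrp a ha) : (e x : ℚ) = e one * x :=
    AddSubgroup.rat_map_eq_mul Hgrp.one_mem ((Hgrp a ha).subtype.comp e.toAddMonoidHom) x
  have he' (x : Hgrp a ha) : (e.symm x : ℚ) = e.symm one * x :=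
    AddSubgroup.rat_map_eq_mul Hgrp.one_mem ((Hgrp a ha).subtype.comp e.symm.toAddMonoidHom) x
  have hmul : (e one : ℚ) * e.symm one = 1 := by
    simpa [mul_comm, one] using (he' (e one)).symm
  have hden := Hgrp.den_eq_one_of_forall_mul_mem h fun x hx => he ⟨x, hx⟩ ▸ (e ⟨x, hx⟩).2
  have hden' := Hgrp.den_eq_one_of_forall_mul_mem h fun x hx => he' ⟨x, hx⟩ ▸ (e.symm ⟨x, hx⟩).2
  rcases Rat.eq_one_or_neg_one_of_mul_eq_one hden hden' hmul with hq | hq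
  · exact Or.inl fun x => by rw [he, hq, one_mul]
  · exact Or.inr fun x => by rw [he, hq, neg_one_mul]
end

section
/- Let a = (a_0, a_1, a_2, …) be a sequence of integers with a_j > 1 for all j. Suppose p is a prime number such that p divides a_j for infinitely many j, while every prime q ≠ p divides a_j for only finitely many j. Then every additive group automorphism of H_a is multiplication by ε·p^m for some ε ∈ {−1, 1} and some integer m ∈ ℤ (where necessarily multiplication by p^m maps H_a onto H_a). -/
open scoped BigOperators

/-!
An additive endomorphism `f` of a subgroup of `ℚ` containing `1` is multiplication by `f 1`,
since `x.den • x = x.num • 1`. So an automorphism of `H_a` is `x ↦ r * x`, where `r` and `r⁻¹` map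
`H_a` into itself; hence every power of `r` and of `r⁻¹` lies in `H_a`. For a prime `q ≠ p`, which
divides only finitely many `a j`, the power of `q` dividing the denominators of elements of `H_a`
is bounded, while `(r ^ k).den = r.den ^ k`. So `r.den` and `r⁻¹.den = |r.num|` are powers of `p`.
-/

open Finset

section SubgroupRat

variable {G : AddSubgroup ℚ}

theorem addMonoidHom_apply_eq_apply_one_mul (h1 : (1 : ℚ) ∈ G) (f : G →+ ℚ) (x : G) :
    f x = f ⟨1, h1⟩ * x := by
  have hx : (x : ℚ).den • x = (x : ℚ).num • (⟨1, h1⟩ : G) :=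
    Subtype.ext (by simp [mul_comm, Rat.mul_den_eq_num])
  have hfx : ((x : ℚ).den : ℚ) * f x = (x : ℚ).num * f ⟨1, h1⟩ := by
    simpa [nsmul_eq_mul, zsmul_eq_mul] using congrArg f hx
  have hden : ((x : ℚ).den : ℚ) ≠ 0 := Nat.cast_ne_zero.2 (x : ℚ).den_nz
  calc f x = (x : ℚ).num / (x : ℚ).den * f ⟨1, h1⟩ := by field_simp; linarith
    _ = f ⟨1, h1⟩ * x := by rw [Rat.num_div_den, mul_comm]

theorem exists_mul_of_addEquiv (h1 : (1 : ℚ) ∈ G) (e : G ≃+ G) :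
    ∃ r : ℚ, r ≠ 0 ∧ (∀ x, (e x : ℚ) = r * x) ∧ ∀ x, (e.symm x : ℚ) = r⁻¹ * x := by
  have he := addMonoidHom_apply_eq_apply_one_mul h1 ((G.subtype).comp e.toAddMonoidHom)
  have he' := addMonoidHom_apply_eq_apply_one_mul h1 ((G.subtype).comp e.symm.toAddMonoidHom)
  simp only [AddMonoidHom.comp_apply, AddEquiv.coe_toAddMonoidHom, AddSubgroup.subtype_apply]
    at he he'
  have hrs : (e ⟨1, h1⟩ : ℚ) * e.symm ⟨1, h1⟩ = 1 := by
    rw [← he, AddEquiv.apply_symm_apply]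
  refine ⟨e ⟨1, h1⟩, left_ne_zero_of_mul_eq_one hrs, he, fun x => ?_⟩
  rw [he', eq_inv_of_mul_eq_one_right hrs]

theorem pow_mem_of_forall_mul_mem (h1 : (1 : ℚ) ∈ G) {r : ℚ} (hr : ∀ x ∈ G, r * x ∈ G) :
    ∀ k : ℕ, r ^ k ∈ G
  | 0 => by simpa using h1
  | k + 1 => by simpa [pow_succ'] using hr _ (pow_mem_of_forall_mul_mem h1 hr k)

theorem ratSMul_eq_of_addEquiv (e : G ≃+ G) {r : ℚ} (he : ∀ x, (e x : ℚ) = r * x) :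
    ratSMul r G = G := by
  ext y
  constructor
  · rintro ⟨x, hx, rfl⟩
    show r * x ∈ G
    exact he ⟨x, hx⟩ ▸ (e ⟨x, hx⟩).2
  · intro hy
    exact ⟨e.symm ⟨y, hy⟩, (e.symm ⟨y, hy⟩).2, (he _).symm.trans (by rw [e.apply_symm_apply])⟩

theorem ratSMul_neg (r : ℚ) (G : AddSubgroup ℚ) : ratSMul (-r) G = ratSMul r G := by
  ext y
  constructor <;> rintro ⟨x, hx, rfl⟩ <;> exact ⟨-x, neg_mem hx, by ring⟩

end SubgroupRat

theorem Rat.exists_eq_sign_mul_zpow {p : ℕ} (hp : p ≠ 0) {r : ℚ} (hr : r ≠ 0)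
    (hden : ∀ q : ℕ, q.Prime → q ∣ r.den → q = p)
    (hden_inv : ∀ q : ℕ, q.Prime → q ∣ r⁻¹.den → q = p) :
    ∃ ε m : ℤ, (ε = 1 ∨ ε = -1) ∧ r = ε * (p : ℚ) ^ m := by
  rw [Rat.den_inv_of_ne_zero hr] at hden_inv
  have hnum : r.num ≠ 0 := Rat.num_ne_zero.2 hr
  have hα := Nat.eq_prime_pow_of_unique_prime_dvd (Int.natAbs_ne_zero.2 hnum) (hden_inv _)
  have hβ := Nat.eq_prime_pow_of_unique_prime_dvd r.den_nz (hden _)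
  set α := r.num.natAbs.primeFactorsList.length
  set β := r.den.primeFactorsList.length
  refine ⟨r.num.sign, α - β, ?_, ?_⟩
  · rcases hnum.lt_or_gt with h | h
    · exact Or.inr (Int.sign_eq_neg_one_of_neg h)
    · exact Or.inl (Int.sign_eq_one_of_pos h)
  · have hp' : (p : ℚ) ≠ 0 := Nat.cast_ne_zero.2 hp
    calc r = (r.num.sign * r.num.natAbs : ℤ) / (r.den : ℚ) := by
          rw [Int.sign_mul_natAbs, Rat.num_div_den]
      _ = r.num.sign * (p : ℚ) ^ (α - β : ℤ) := by
          rw [zpow_sub₀ hp', zpow_natCast, zpow_natCast, hβ, hα]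
          push_cast
          ring

theorem prime_pow_dvd_prod_range_of_not_dvd {a : ℕ → ℤ} {q : ℤ} (hq : Prime q) {J : ℕ}
    (hJ : ∀ j, J ≤ j → ¬ q ∣ a j) {n k : ℕ} (h : q ^ k ∣ ∏ j ∈ range n, a j) :
    q ^ k ∣ ∏ j ∈ range J, a j := by
  rcases le_total n J with hnJ | hJn
  · exact h.trans (prod_dvd_prod_of_subset _ _ _ (range_subset_range.2 hnJ))
  · rw [← prod_range_mul_prod_Ico _ hJn] at h
    have hcop : IsCoprime (q ^ k) (∏ j ∈ Ico J n, a j) :=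
      (IsCoprime.prod_right fun j hj =>
        hq.coprime_iff_not_dvd.2 (hJ j (mem_Ico.1 hj).1)).pow_left
    exact hcop.dvd_of_dvd_mul_right h

namespace Hgrp

variable {a : ℕ → ℤ} {ha : ∀ j, 1 < a j}

theorem exists_den_dvd_prod {x : ℚ} (hx : x ∈ Hgrp a ha) :
    ∃ n, (x.den : ℤ) ∣ ∏ j ∈ range n, a j := by
  obtain ⟨m, n, rfl⟩ := hx
  refine ⟨n + 1, ?_⟩
  rw [← Int.cast_prod, Rat.intCast_div_eq_divInt]
  exact Rat.den_dvd _ _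

theorem not_dvd_den_of_forall_pow_mem {q : ℕ} (hq : q.Prime)
    (hfin : {j : ℕ | (q : ℤ) ∣ a j}.Finite) {x : ℚ} (hx : ∀ k : ℕ, x ^ k ∈ Hgrp a ha) :
    ¬ q ∣ x.den := by
  intro hqx
  obtain ⟨J, hJ⟩ := hfin.bddAbove
  have hB : ∏ j ∈ range (J + 1), a j ≠ 0 :=
    prod_ne_zero_iff.2 fun j _ => (zero_lt_one.trans (ha j)).ne'
  obtain ⟨k, hk⟩ : FiniteMultiplicity (q : ℤ) (∏ j ∈ range (J + 1), a j) :=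
    Int.finiteMultiplicity_iff.2 ⟨by simpa using hq.ne_one, hB⟩
  obtain ⟨n, hn⟩ := exists_den_dvd_prod (hx (k + 1))
  rw [Rat.den_pow] at hn
  have hqn : (q : ℤ) ^ (k + 1) ∣ ∏ j ∈ range n, a j :=
    (pow_dvd_pow_of_dvd (Int.natCast_dvd_natCast.2 hqx) _).trans (by exact_mod_cast hn)
  exact hk (prime_pow_dvd_prod_range_of_not_dvd (Nat.prime_iff_prime_int.1 hq)
    (fun j hj hdvd => by have := hJ hdvd; omega) hqn)

end Hgrp

theorem aut_Hgrp_eq_pm_pow_p_general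
    (a : ℕ → ℤ) (ha : ∀ j, 1 < a j) (p : ℕ) (hp : p.Prime)
    (hq : ∀ q : ℕ, q.Prime → q ≠ p → {j : ℕ | (q : ℤ) ∣ a j}.Finite)
    (e : Hgrp a ha ≃+ Hgrp a ha) :
    ∃ (ε : ℤ) (m : ℤ), (ε = 1 ∨ ε = -1) ∧
      ratSMul ((p : ℚ) ^ m) (Hgrp a ha) = (Hgrp a ha : Set ℚ) ∧
      ∀ x : Hgrp a ha, (e x : ℚ) = (ε : ℚ) * (p : ℚ) ^ m * (x : ℚ) := by
  obtain ⟨r, hr0, he, he_symm⟩ := exists_mul_of_addEquiv Hgrp.one_mem e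
  have hden : ∀ s : ℚ, (∀ x ∈ Hgrp a ha, s * x ∈ Hgrp a ha) →
      ∀ q : ℕ, q.Prime → q ∣ s.den → q = p := fun s hs q hq' hdvd =>
    by_contra fun hne => Hgrp.not_dvd_den_of_forall_pow_mem hq' (hq q hq' hne)
      (pow_mem_of_forall_mul_mem Hgrp.one_mem hs) hdvd
  obtain ⟨ε, m, hε, hr⟩ := Rat.exists_eq_sign_mul_zpow hp.ne_zero hr0
    (hden r fun x hx => he ⟨x, hx⟩ ▸ (e ⟨x, hx⟩).2)
    (hden r⁻¹ fun x hx => he_symm ⟨x, hx⟩ ▸ (e.symm ⟨x, hx⟩).2)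
  refine ⟨ε, m, hε, ?_, fun x => by rw [he, hr]⟩
  have hsmul := ratSMul_eq_of_addEquiv e he
  rcases hε with rfl | rfl
  · simpa [hr] using hsmul
  · rwa [hr, Int.cast_neg, Int.cast_one, neg_one_mul, ratSMul_neg] at hsmul

/-- Under condition (i) of the main theorem, every automorphism of `H_a` is
multiplication by `± p^m` for some integer `m` (and multiplication by `p^m` maps
`H_a` onto `H_a`). -/
theorem aut_Hgrp_eq_pm_pow_p
    (a : ℕ → ℤ) (ha : ∀ j, 1 < a j) (p : ℕ) (hp : p.Prime)
    (hpinf : {j : ℕ | (p : ℤ) ∣ a j}.Infinite)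
    (hq : ∀ q : ℕ, q.Prime → q ≠ p → {j : ℕ | (q : ℤ) ∣ a j}.Finite)
    (e : Hgrp a ha ≃+ Hgrp a ha) :
    ∃ (ε : ℤ) (m : ℤ), (ε = 1 ∨ ε = -1) ∧
      ratSMul ((p : ℚ) ^ m) (Hgrp a ha) = (Hgrp a ha : Set ℚ) ∧
      ∀ x : Hgrp a ha, (e x : ℚ) = (ε : ℚ) * (p : ℚ) ^ m * (x : ℚ) :=
  aut_Hgrp_eq_pm_pow_p_general a ha p hp hq e
end

section
/- Let Y be an abelian group, L a subgroup of Y, and g : L → ℂ a positive definite function on L. Define f : Y → ℂ by f(y) = g(y) for y ∈ L and f(y) = 0 for y ∉ L. Then f is a positive definite function on Y. -/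
open scoped BigOperators

/-!
Write `Y` as the disjoint union of the cosets of `L`. Since `f` vanishes off `L`, in the
quadratic form `∑ cᵢ c̄ⱼ f(yᵢ - yⱼ)` only pairs of points in the same coset contribute, so the
form is a sum of one block per coset. Translating a block by one of its points moves it into `L`
without changing the differences `yᵢ - yⱼ`, so each block is a quadratic form of `g`, hence
nonnegative.
-/

open scoped ComplexOrder

namespace Finset

variable {ι κ M : Type*} [Fintype ι] [DecidableEq κ] [AddCommMonoid M]

theorem sum_sum_eq_sum_image_sum_sum_fiber (p : ι → κ) (T : ι → ι → M)
    (hT : ∀ i j, p i ≠ p j → T i j = 0) :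
    ∑ i, ∑ j, T i j =
      ∑ q ∈ univ.image p, ∑ i with p i = q, ∑ j with p j = q, T i j := by
  rw [← sum_fiberwise_of_maps_to fun i _ => mem_image_of_mem p (mem_univ i)]
  refine sum_congr rfl fun q _ => sum_congr rfl fun i hi => ?_
  rw [sum_filter]
  refine sum_congr rfl fun j _ => ?_
  split_ifs with hj
  · rfl
  · exact hT i j fun hij => hj (hij ▸ (mem_filter.mp hi).2)

end Finset

theorem isPositiveDefinite_iff_nonneg {G : Type*} [AddCommGroup G] {f : G → ℂ} :
    IsPositiveDefinite f ↔ ∀ (n : ℕ) (y : Fin n → G) (c : Fin n → ℂ),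
      0 ≤ ∑ i, ∑ j, c i * (starRingEnd ℂ) (c j) * f (y i - y j) := by
  refine forall₃_congr fun n y c => ⟨?_, fun h => ⟨_, Complex.nonneg_iff.mp h |>.1, ?_⟩⟩
  · rintro ⟨t, ht, hsum⟩
    exact hsum ▸ Complex.zero_le_real.mpr ht
  · exact Complex.eq_re_of_ofReal_le h

namespace IsPositiveDefinite

variable {G : Type*} [AddCommGroup G] {f : G → ℂ}

theorem sum_nonneg (hf : IsPositiveDefinite f) {ι : Type*} [Fintype ι] (y : ι → G)
    (c : ι → ℂ) : 0 ≤ ∑ i, ∑ j, c i * (starRingEnd ℂ) (c j) * f (y i - y j) := by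
  let e := Fintype.equivFin ι
  convert isPositiveDefinite_iff_nonneg.mp hf _ (y ∘ e.symm) (c ∘ e.symm) using 1
  exact Fintype.sum_equiv e _ _ fun i => Fintype.sum_equiv e _ _ fun j => by simp

theorem sum_nonneg_of_sub_mem {L : AddSubgroup G} (hf : IsPositiveDefinite fun x : L => f x)
    {ι : Type*} (s : Finset ι) (y : ι → G) (c : ι → ℂ)
    (hy : ∀ i ∈ s, ∀ j ∈ s, y i - y j ∈ L) :
    0 ≤ ∑ i ∈ s, ∑ j ∈ s, c i * (starRingEnd ℂ) (c j) * f (y i - y j) := by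
  rcases s.eq_empty_or_nonempty with rfl | ⟨i₀, hi₀⟩
  · simp
  convert hf.sum_nonneg (fun i : s => ⟨y i - y i₀, hy i i.2 i₀ hi₀⟩) (fun i => c i) using 1
  rw [← Finset.sum_coe_sort s]
  refine Finset.sum_congr rfl fun i _ => ?_
  rw [← Finset.sum_coe_sort s]
  simp only [AddSubgroupClass.coe_sub, sub_sub_sub_cancel_right]

end IsPositiveDefinite

/-- Lemma 2.7: the extension by zero of a positive definite function on a subgroup `L`
of an abelian group `Y` is positive definite on `Y`. -/
theorem posdef_extension_by_zero
    {Y : Type*} [AddCommGroup Y] (L : AddSubgroup Y)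
    (g : L → ℂ) (hg : IsPositiveDefinite g)
    (f : Y → ℂ)
    (hfL : ∀ (y : Y) (hy : y ∈ L), f y = g ⟨y, hy⟩)
    (hf0 : ∀ y : Y, y ∉ L → f y = 0) :
    IsPositiveDefinite f := by
  classical
  obtain rfl : g = fun x : L => f x := funext fun x => (hfL x x.2).symm
  rw [isPositiveDefinite_iff_nonneg]
  intro n y c
  let coset : Fin n → Y ⧸ L := fun i => y i
  have hcoset {i j : Fin n} : coset i = coset j ↔ y i - y j ∈ L := QuotientAddGroup.eq_iff_sub_mem
  rw [Finset.sum_sum_eq_sum_image_sum_sum_fiber coset _ fun i j hij => by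
    rw [hf0 _ (hcoset.not.mp hij), mul_zero]]
  refine Finset.sum_nonneg fun q _ => hg.sum_nonneg_of_sub_mem _ y c fun i hi j hj => ?_
  exact hcoset.mp ((Finset.mem_filter.mp hi).2.trans (Finset.mem_filter.mp hj).2.symm)
end

section
/- Let p < q be prime numbers, and let Y be a nontrivial additive subgroup of ℚ such that p·Y = Y and q·Y = Y. Let a, b be positive integers with q^{2a} = p²·b + 1, let H = {m/n ∈ Y : n a positive integer not divisible by p, m ∈ ℤ}, let H_1 = {m/(p·n) ∈ Y : m, n integers not divisible by p, n > 0}, let L = H ∪ H_1, and fix 0 < c < 1. Define f : Y → ℝ by f(y) = 1 for y ∈ H, f(y) = c for y ∈ H_1, and f(y) = 0 otherwise. Then: (1) L is a subgroup of Y; (2) f is a positive definite function on Y with f(0) = 1; (3) f(y) = (f((p/q^a)·y))^b · f((1/q^a)·y) for all y ∈ Y, where the rationals r_1 = ⋯ = r_b = p/q^a and r_{b+1} = 1/q^a satisfy r_j·Y = Y and r_1² + ⋯ + r_{b+1}² = 1; and (4) there do not exist σ ≥ 0, a subgroup E of Y, and a character χ of Y such that f(y) = χ(y)·exp(−σ y²)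 for y ∈ E and f(y) = 0 for y ∉ E. -/
/-!
The sets `H` and `L = H ∪ H₁` are the subgroups `{v_p ≥ 0}` and `{v_p ≥ -1}` of `Y`, and
`f = (1 - c) 𝟙_H + c 𝟙_L` is a nonnegative combination of indicators of subgroups, hence positive
definite. Multiplication by `p / qᵃ` raises the `p`-adic valuation by one and multiplication by
`1 / qᵃ` preserves it, which gives the functional equation. A Gauss–Haar function satisfies
`|f y| = exp (-σ y²)` on its support; `f = 1` at a nonzero point forces `σ = 0`, so `|f|` only
takes the values `0` and `1`, whereas `f = c` on `H₁`, which is nonempty because `p` is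
invertible on `Y`.
-/

open scoped BigOperators

open Finset Pointwise

namespace IsPositiveDefinite

variable {G : Type*} [AddCommGroup G] {f g : G → ℂ}

theorem add (hf : IsPositiveDefinite f) (hg : IsPositiveDefinite g) :
    IsPositiveDefinite (f + g) := by
  intro n y c
  obtain ⟨s, hs, hfs⟩ := hf n y c
  obtain ⟨t, ht, hgt⟩ := hg n y c
  refine ⟨s + t, add_nonneg hs ht, ?_⟩
  simp only [Pi.add_apply, mul_add, sum_add_distrib, hfs, hgt, Complex.ofReal_add]

theorem const_mul (hf : IsPositiveDefinite f) {r : ℝ} (hr : 0 ≤ r) :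
    IsPositiveDefinite fun x => (r : ℂ) * f x := by
  intro n y c
  obtain ⟨s, hs, hfs⟩ := hf n y c
  refine ⟨r * s, mul_nonneg hr hs, ?_⟩
  simp only [mul_left_comm _ (r : ℂ), ← mul_sum, hfs, Complex.ofReal_mul]

end IsPositiveDefinite

theorem isPositiveDefinite_indicator {G : Type*} [AddCommGroup G] (K : AddSubgroup G) :
    IsPositiveDefinite ((K : Set G).indicator 1) := by
  classical
  intro n y c
  let φ : Fin n → G ⧸ K := fun i => y i
  let S : G ⧸ K → ℂ := fun k => ∑ i with φ i = k, c i
  -- grouping the indices by cosets of `K`, the form is `∑ₖ |Sₖ|²`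
  refine ⟨∑ k ∈ univ.image φ, Complex.normSq (S k),
    sum_nonneg fun _ _ => Complex.normSq_nonneg _, ?_⟩
  have hrow : ∀ i, ∑ j, c i * starRingEnd ℂ (c j) * (K : Set G).indicator 1 (y i - y j) =
      c i * starRingEnd ℂ (S (φ i)) := by
    intro i
    simp only [S, map_sum, mul_sum, sum_filter, apply_ite (starRingEnd ℂ), map_zero, mul_ite,
      mul_zero, Set.indicator_apply, SetLike.mem_coe, Pi.one_apply, mul_one, φ,
      ← QuotientAddGroup.eq_iff_sub_mem, eq_comm]
  calc _ = ∑ i, c i * starRingEnd ℂ (S (φ i)) := sum_congr rfl fun i _ => hrow i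
    _ = ∑ k ∈ univ.image φ, ∑ i with φ i = k, c i * starRingEnd ℂ (S (φ i)) :=
      (sum_fiberwise_of_maps_to (fun i _ => mem_image_of_mem φ (mem_univ i)) _).symm
    _ = ∑ k ∈ univ.image φ, S k * starRingEnd ℂ (S k) := by
      refine sum_congr rfl fun k _ => ?_
      rw [sum_mul]
      exact sum_congr rfl fun i hi => by rw [(mem_filter.1 hi).2]
    _ = _ := by simp only [Complex.mul_conj, Complex.ofReal_sum]

section RatSMul

variable {Y : AddSubgroup ℚ} {r s : ℚ}

theorem ratSMul_eq_smul (r : ℚ) (Y : AddSubgroup ℚ) : ratSMul r Y = r • (Y : Set ℚ) :=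
  Set.image_smul (a := r)

theorem mul_mem_of_ratSMul_eq (h : ratSMul r Y = Y) {y : ℚ} (hy : y ∈ Y) : r * y ∈ Y := by
  rw [← SetLike.mem_coe, ← h]
  exact Set.mem_image_of_mem _ hy

theorem ratSMul_mul (hr : ratSMul r Y = Y) (hs : ratSMul s Y = Y) : ratSMul (r * s) Y = Y := by
  rw [ratSMul_eq_smul] at *
  rw [mul_smul, hs, hr]

theorem ratSMul_inv (h : ratSMul r Y = Y) : ratSMul r⁻¹ Y = Y := by
  obtain rfl | hr := eq_or_ne r 0
  · rwa [inv_zero]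
  rw [ratSMul_eq_smul] at *
  nth_rw 1 [← h]
  exact inv_smul_smul₀ hr _

theorem ratSMul_pow (h : ratSMul r Y = Y) (n : ℕ) : ratSMul (r ^ n) Y = Y := by
  induction n with
  | zero => simp [ratSMul]
  | succ n ih => rw [pow_succ]; exact ratSMul_mul ih h

theorem ratSMul_zpow (h : ratSMul r Y = Y) : ∀ k : ℤ, ratSMul (r ^ k) Y = Y
  | (n : ℕ) => by rw [zpow_natCast]; exact ratSMul_pow h n
  | .negSucc n => by rw [zpow_negSucc]; exact ratSMul_inv (ratSMul_pow h _)

end RatSMul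

section Padic

variable {p : ℕ} [Fact p.Prime]

theorem padicValRat_nonneg_iff_not_dvd_den {y : ℚ} : 0 ≤ padicValRat p y ↔ ¬ p ∣ y.den := by
  rw [padicValRat_def]
  by_cases hden : p ∣ y.den
  · have hnum : ¬ (p : ℤ) ∣ y.num := fun hnum =>
      Nat.not_coprime_of_dvd_of_dvd (Fact.out : p.Prime).one_lt (Int.natCast_dvd.1 hnum) hden
        y.reduced
    rw [padicValInt.eq_zero_of_not_dvd hnum]
    have := one_le_padicValNat_of_dvd y.den_ne_zero hden
    simp only [hden, not_true_eq_false, iff_false]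
    omega
  · rw [padicValNat.eq_zero_of_not_dvd hden]
    simp [hden]

theorem padicValRat_nonneg_iff_exists_div {y : ℚ} :
    0 ≤ padicValRat p y ↔ ∃ (m : ℤ) (n : ℕ), 0 < n ∧ ¬ p ∣ n ∧ y = m / n := by
  refine ⟨fun hy => ⟨y.num, y.den, y.pos, padicValRat_nonneg_iff_not_dvd_den.1 hy,
    (Rat.num_div_den y).symm⟩, ?_⟩
  rintro ⟨m, n, -, hn, rfl⟩
  rw [padicValRat_nonneg_iff_not_dvd_den]
  exact fun h => hn (h.trans (by exact_mod_cast Rat.den_dvd m n))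

theorem padicValRat_eq_neg_one_iff_exists_div {y : ℚ} :
    padicValRat p y = -1 ↔ ∃ (m n : ℤ), 0 < n ∧ ¬ (p : ℤ) ∣ m ∧ ¬ (p : ℤ) ∣ n ∧
      y = m / (p * n) := by
  have hp : (p : ℚ) ≠ 0 := by exact_mod_cast (Fact.out : p.Prime).ne_zero
  constructor
  · intro hy
    have hy0 : y ≠ 0 := by rintro rfl; simp at hy
    set z := p * y
    have hz : padicValRat p z = 0 := by
      rw [padicValRat.mul hp hy0, padicValRat.self (Fact.out : p.Prime).one_lt, hy]; rfl
    have hden : ¬ p ∣ z.den := padicValRat_nonneg_iff_not_dvd_den.1 hz.ge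
    refine ⟨z.num, z.den, by exact_mod_cast z.pos, fun hnum => ?_, by exact_mod_cast hden, ?_⟩
    · rw [padicValRat_def, padicValNat.eq_zero_of_not_dvd hden] at hz
      have hz0 : z.num ≠ 0 := Rat.num_ne_zero.2 (mul_ne_zero hp hy0)
      have := ((padicValInt_dvd_iff 1 z.num).1 (by rwa [pow_one])).resolve_left hz0
      omega
    · rw [Int.cast_natCast, mul_comm (p : ℚ), ← div_div, Rat.num_div_den,
        mul_div_cancel_left₀ y hp]
  · rintro ⟨m, n, hn, hm, hpn, rfl⟩
    have hm0 : (m : ℚ) ≠ 0 := by exact_mod_cast fun h : m = 0 => hm (h ▸ dvd_zero _)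
    have hn0 : (n : ℚ) ≠ 0 := by exact_mod_cast hn.ne'
    rw [padicValRat.div hm0 (mul_ne_zero hp hn0), padicValRat.mul hp hn0,
      padicValRat.self (Fact.out : p.Prime).one_lt, padicValRat.of_int, padicValRat.of_int,
      padicValInt.eq_zero_of_not_dvd hm, padicValInt.eq_zero_of_not_dvd hpn]
    rfl

theorem padicValRat_div_pow_of_not_dvd {q : ℕ} (hpq : ¬ p ∣ q) {x : ℚ} (hx : x ≠ 0) (a : ℕ) :
    padicValRat p (x / (q : ℚ) ^ a) = padicValRat p x := by
  have hq : (q : ℚ) ≠ 0 := by exact_mod_cast fun h : q = 0 => hpq (h ▸ dvd_zero p)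
  rw [padicValRat.div hx (pow_ne_zero a hq), padicValRat.pow, padicValRat.of_nat,
    padicValNat.eq_zero_of_not_dvd hpq, Nat.cast_zero, mul_zero, sub_zero]

theorem mem_leAddSubgroup_padicValuation_iff {k : ℤ} (hk : 0 ≤ k) {y : ℚ} :
    y ∈ (Rat.padicValuation p).leAddSubgroup (WithZero.exp k) ↔ -k ≤ padicValRat p y := by
  rw [Valuation.mem_leAddSubgroup_iff]
  obtain rfl | hy := eq_or_ne y 0
  · simpa using hk
  · simpa [Rat.padicValuation, hy, -WithZero.exp_neg] using neg_le

theorem exists_mem_padicValRat_eq {Y : AddSubgroup ℚ} (hY : Y ≠ ⊥)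
    (hpY : ratSMul p Y = Y) (k : ℤ) : ∃ y ∈ Y, y ≠ 0 ∧ padicValRat p y = k := by
  have hp : (p : ℚ) ≠ 0 := by exact_mod_cast (Fact.out : p.Prime).ne_zero
  obtain ⟨z, hz⟩ := AddSubgroup.ne_bot_iff_exists_ne_zero.1 hY
  have hz0 : (z : ℚ) ≠ 0 := by simpa using hz
  refine ⟨(p : ℚ) ^ (k - padicValRat p z) * z, mul_mem_of_ratSMul_eq (ratSMul_zpow hpY _) z.2,
    mul_ne_zero (zpow_ne_zero _ hp) hz0, ?_⟩
  rw [padicValRat.mul (zpow_ne_zero _ hp) hz0, padicValRat.zpow,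
    padicValRat.self (Fact.out : p.Prime).one_lt]
  ring

end Padic

/-- The value of `f` at a point of `p`-adic valuation `k`. Since `padicValRat p 0 = 0`, the point
`0` gets the value `1`. -/
def valuationProfile (c : ℝ) (k : ℤ) : ℝ := if 0 ≤ k then 1 else if k = -1 then c else 0

theorem valuationProfile_eq_pow_mul (c : ℝ) (b : ℕ) (k : ℤ) :
    valuationProfile c k = valuationProfile c (k + 1) ^ b * valuationProfile c k := by
  unfold valuationProfile
  split_ifs <;> first | omega | simp

theorem eq_valuationProfile_of_forall {p : ℕ} {Y : AddSubgroup ℚ} {f : Y → ℝ} {c : ℝ}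
    (h1 : ∀ y : Y, 0 ≤ padicValRat p y → f y = 1)
    (hc : ∀ y : Y, padicValRat p y = -1 → f y = c) (h0 : ∀ y : Y, padicValRat p y < -1 → f y = 0)
    (y : Y) : f y = valuationProfile c (padicValRat p y) := by
  unfold valuationProfile
  split_ifs with hy1 hyc
  · exact h1 y hy1
  · exact hc y hyc
  · exact h0 y (by omega)

section Profile

variable {p : ℕ} [Fact p.Prime] {Y : AddSubgroup ℚ} {f : Y → ℝ} {c : ℝ}

theorem isPositiveDefinite_of_eq_valuationProfile (hc0 : 0 ≤ c) (hc1 : c ≤ 1)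
    (hf : ∀ y : Y, f y = valuationProfile c (padicValRat p y)) :
    IsPositiveDefinite fun y : Y => (f y : ℂ) := by
  let K (k : ℤ) : AddSubgroup Y :=
    ((Rat.padicValuation p).leAddSubgroup (WithZero.exp k)).comap Y.subtype
  have hK : ∀ k, 0 ≤ k → ∀ y : Y,
      (K k : Set Y).indicator (1 : Y → ℂ) y = if -k ≤ padicValRat p y then 1 else 0 := by
    intro k hk y
    classical
    simp only [Set.indicator_apply, SetLike.mem_coe, K, AddSubgroup.mem_comap,
      AddSubgroup.coe_subtype, mem_leAddSubgroup_padicValuation_iff hk, Pi.one_apply]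
  have hdecomp : (fun y : Y => (f y : ℂ)) =
      (fun y => ((1 - c : ℝ) : ℂ) * (K 0 : Set Y).indicator 1 y) +
        fun y => (c : ℂ) * (K 1 : Set Y).indicator 1 y := by
    funext y
    rw [Pi.add_apply, hK 0 le_rfl, hK 1 zero_le_one, hf, valuationProfile]
    split_ifs <;> first | omega | (push_cast; ring)
  rw [hdecomp]
  exact ((isPositiveDefinite_indicator _).const_mul (by linarith)).add
    ((isPositiveDefinite_indicator _).const_mul hc0)

theorem eq_pow_mul_of_eq_valuationProfile
    (hf : ∀ y : Y, f y = valuationProfile c (padicValRat p y)) {A B : ℚ}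
    (hA : padicValRat p A = 1) (hB0 : B ≠ 0) (hB : padicValRat p B = 0)
    (hAY : ∀ y : Y, A * y ∈ Y) (hBY : ∀ y : Y, B * y ∈ Y) (b : ℕ) (y : Y) :
    f y = f ⟨A * y, hAY y⟩ ^ b * f ⟨B * y, hBY y⟩ := by
  have hA0 : A ≠ 0 := by rintro rfl; simp at hA
  simp only [hf]
  obtain hy | hy := eq_or_ne (y : ℚ) 0
  · simp [hy, valuationProfile]
  · rw [padicValRat.mul hA0 hy, padicValRat.mul hB0 hy, hA, hB, zero_add, add_comm]
    exact valuationProfile_eq_pow_mul c b _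

end Profile

def IsGaussHaar (Y : AddSubgroup ℚ) (f : Y → ℝ) : Prop :=
  ∃ (σ : ℝ), 0 ≤ σ ∧ ∃ (E : AddSubgroup ℚ), E ≤ Y ∧
    ∃ (χ : AddChar Y Circle),
      (∀ y : Y, (y : ℚ) ∈ E →
        ((f y : ℂ)) = (χ y : ℂ) * Complex.exp (-(σ : ℂ) * ((y : ℚ) : ℂ) ^ 2)) ∧
      (∀ y : Y, (y : ℚ) ∉ E → f y = 0)

theorem IsGaussHaar.abs_eq_one {Y : AddSubgroup ℚ} {f : Y → ℝ} (hf : IsGaussHaar Y f)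
    {y₀ : Y} (hy₀ : y₀ ≠ 0) (hf₀ : |f y₀| = 1) {y : Y} (hy : f y ≠ 0) : |f y| = 1 := by
  obtain ⟨σ, -, E, -, χ, hE, hEc⟩ := hf
  have habs : ∀ y : Y, f y ≠ 0 → |f y| = Real.exp (-(σ * (y : ℝ) ^ 2)) := by
    intro y hy
    have hyE : (y : ℚ) ∈ E := by_contra fun h => hy (hEc y h)
    simpa [Complex.norm_exp, Circle.norm_coe, ← Complex.ofReal_ratCast, ← Complex.ofReal_pow]
      using congrArg norm (hE y hyE)
  have hσ : σ = 0 := by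
    have h := habs y₀ (by simp [← abs_ne_zero, hf₀])
    rw [hf₀, eq_comm, Real.exp_eq_one_iff, neg_eq_zero, mul_eq_zero] at h
    exact h.resolve_right (by simpa using hy₀)
  simpa [hσ] using habs y hy

theorem polya_fails_two_primes_general
    (p q : ℕ) (hp : p.Prime) (hq : q.Prime) (hpq : p < q)
    (Y : AddSubgroup ℚ) (hY : Y ≠ ⊥)
    (hpY : ratSMul (p : ℚ) Y = (Y : Set ℚ)) (hqY : ratSMul (q : ℚ) Y = (Y : Set ℚ))
    (a b : ℕ) (hab : q ^ (2 * a) = p ^ 2 * b + 1)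
    (H H₁ : Set ℚ)
    (hH : H = {y : ℚ | y ∈ Y ∧ ∃ (m : ℤ) (n : ℕ), 0 < n ∧ ¬ (p ∣ n) ∧
      y = (m : ℚ) / (n : ℚ)})
    (hH₁ : H₁ = {y : ℚ | y ∈ Y ∧ ∃ (m n : ℤ), 0 < n ∧ ¬ ((p : ℤ) ∣ m) ∧ ¬ ((p : ℤ) ∣ n) ∧
      y = (m : ℚ) / ((p : ℚ) * (n : ℚ))})
    (c : ℝ) (hc0 : 0 < c) (hc1 : c < 1)
    (f : Y → ℝ)
    (hf1 : ∀ y : Y, (y : ℚ) ∈ H → f y = 1)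
    (hfc : ∀ y : Y, (y : ℚ) ∈ H₁ → f y = c)
    (hf0 : ∀ y : Y, (y : ℚ) ∉ H ∪ H₁ → f y = 0)
    (hm1 : ∀ y : Y, ((p : ℚ) / (q : ℚ) ^ a) * (y : ℚ) ∈ Y)
    (hm2 : ∀ y : Y, (1 / (q : ℚ) ^ a) * (y : ℚ) ∈ Y) :
    -- (1) L = H ∪ H₁ is a subgroup of Y
    (∃ L : AddSubgroup ℚ, (L : Set ℚ) = H ∪ H₁ ∧ L ≤ Y) ∧
    -- (2) f is positive definite with f(0) = 1
    (IsPositiveDefinite (fun y : Y => (f y : ℂ)) ∧ f 0 = 1) ∧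
    -- (3) f satisfies the functional equation, with coefficients that are
    -- automorphisms of Y whose squares sum to 1
    (ratSMul ((p : ℚ) / (q : ℚ) ^ a) Y = (Y : Set ℚ) ∧
      ratSMul (1 / (q : ℚ) ^ a) Y = (Y : Set ℚ) ∧
      (b : ℚ) * ((p : ℚ) / (q : ℚ) ^ a) ^ 2 + (1 / (q : ℚ) ^ a) ^ 2 = 1 ∧
      ∀ y : Y, f y = (f ⟨((p : ℚ) / (q : ℚ) ^ a) * (y : ℚ), hm1 y⟩) ^ b *
        f ⟨(1 / (q : ℚ) ^ a) * (y : ℚ), hm2 y⟩) ∧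
    -- (4) f is not of Gauss–Haar form
    ¬ ∃ (σ : ℝ), 0 ≤ σ ∧ ∃ (E : AddSubgroup ℚ), E ≤ Y ∧
        ∃ (χ : AddChar Y Circle),
          (∀ y : Y, (y : ℚ) ∈ E →
            ((f y : ℂ)) = (χ y : ℂ) * Complex.exp (-(σ : ℂ) * ((y : ℚ) : ℂ) ^ 2)) ∧
          (∀ y : Y, (y : ℚ) ∉ E → f y = 0) := by
  have : Fact p.Prime := ⟨hp⟩
  have hpq' : ¬ p ∣ q := fun h => hpq.ne ((Nat.prime_dvd_prime_iff_eq hp hq).1 h)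
  have hq0 : (q : ℚ) ≠ 0 := by exact_mod_cast hq.ne_zero
  have hH' : ∀ y, y ∈ H ↔ y ∈ Y ∧ 0 ≤ padicValRat p y := by
    simp [hH, padicValRat_nonneg_iff_exists_div]
  have hH₁' : ∀ y, y ∈ H₁ ↔ y ∈ Y ∧ padicValRat p y = -1 := by
    simp [hH₁, padicValRat_eq_neg_one_iff_exists_div]
  have hf : ∀ y : Y, f y = valuationProfile c (padicValRat p y) :=
    eq_valuationProfile_of_forall (fun y hy => hf1 y ((hH' y).2 ⟨y.2, hy⟩))
      (fun y hy => hfc y ((hH₁' y).2 ⟨y.2, hy⟩))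
      fun y hy => hf0 y (by simp only [Set.mem_union, hH', hH₁']; omega)
  refine ⟨⟨Y ⊓ (Rat.padicValuation p).leAddSubgroup (WithZero.exp 1), ?_, inf_le_left⟩,
    ⟨isPositiveDefinite_of_eq_valuationProfile hc0.le hc1.le hf, by simp [hf, valuationProfile]⟩,
    ⟨?_, ?_, ?_, eq_pow_mul_of_eq_valuationProfile hf ?_ ?_ ?_ hm1 hm2 b⟩, ?_⟩
  · ext y
    simp only [AddSubgroup.coe_inf, Set.mem_inter_iff, SetLike.mem_coe, Set.mem_union, hH', hH₁',
      mem_leAddSubgroup_padicValuation_iff zero_le_one, ← and_or_left]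
    exact and_congr_right fun _ => by omega
  · rw [div_eq_mul_inv]; exact ratSMul_mul hpY (ratSMul_inv (ratSMul_pow hqY a))
  · rw [one_div]; exact ratSMul_inv (ratSMul_pow hqY a)
  · have : ((q : ℚ) ^ a) ^ 2 = p ^ 2 * b + 1 := by rw [← pow_mul, mul_comm]; exact_mod_cast hab
    field_simp
    linear_combination -this
  · rw [padicValRat_div_pow_of_not_dvd hpq' (by exact_mod_cast hp.ne_zero),
      padicValRat.self hp.one_lt]
  · exact one_div_ne_zero (pow_ne_zero _ hq0)
  · rw [padicValRat_div_pow_of_not_dvd hpq' one_ne_zero, padicValRat.one]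
  · obtain ⟨y₀, hy₀Y, hy₀, hv₀⟩ := exists_mem_padicValRat_eq hY hpY 0
    obtain ⟨y₁, hy₁Y, -, hv₁⟩ := exists_mem_padicValRat_eq hY hpY (-1)
    intro (hGH : IsGaussHaar Y f)
    have h := hGH.abs_eq_one (y₀ := ⟨y₀, hy₀Y⟩) (y := ⟨y₁, hy₁Y⟩) (by simpa using hy₀)
      (by simp [hf, hv₀, valuationProfile]) (by simp [hf, hv₁, valuationProfile, hc0.ne'])
    simp [hf, hv₁, valuationProfile, abs_of_pos hc0, hc1.ne] at h

/-- Dual formulation of Proposition 2.8: if two distinct primes `p < q` are invertible on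
the subgroup `Y ⊆ ℚ`, then the function `f` equal to `1` on `H`, to `c` on `H₁`, and to
`0` elsewhere is a normalized positive definite solution of the Pólya functional equation
with coefficients `r₁ = ⋯ = r_b = p/qᵃ`, `r_{b+1} = 1/qᵃ`, yet it is not of Gauss–Haar
form. -/
theorem polya_fails_two_primes
    (p q : ℕ) (hp : p.Prime) (hq : q.Prime) (hpq : p < q)
    (Y : AddSubgroup ℚ) (hY : Y ≠ ⊥)
    (hpY : ratSMul (p : ℚ) Y = (Y : Set ℚ)) (hqY : ratSMul (q : ℚ) Y = (Y : Set ℚ))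
    (a b : ℕ) (ha : 0 < a) (hb : 0 < b) (hab : q ^ (2 * a) = p ^ 2 * b + 1)
    (H H₁ : Set ℚ)
    (hH : H = {y : ℚ | y ∈ Y ∧ ∃ (m : ℤ) (n : ℕ), 0 < n ∧ ¬ (p ∣ n) ∧
      y = (m : ℚ) / (n : ℚ)})
    (hH₁ : H₁ = {y : ℚ | y ∈ Y ∧ ∃ (m n : ℤ), 0 < n ∧ ¬ ((p : ℤ) ∣ m) ∧ ¬ ((p : ℤ) ∣ n) ∧
      y = (m : ℚ) / ((p : ℚ) * (n : ℚ))})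
    (c : ℝ) (hc0 : 0 < c) (hc1 : c < 1)
    (f : Y → ℝ)
    (hf1 : ∀ y : Y, (y : ℚ) ∈ H → f y = 1)
    (hfc : ∀ y : Y, (y : ℚ) ∈ H₁ → f y = c)
    (hf0 : ∀ y : Y, (y : ℚ) ∉ H ∪ H₁ → f y = 0)
    (hm1 : ∀ y : Y, ((p : ℚ) / (q : ℚ) ^ a) * (y : ℚ) ∈ Y)
    (hm2 : ∀ y : Y, (1 / (q : ℚ) ^ a) * (y : ℚ) ∈ Y) :
    -- (1) L = H ∪ H₁ is a subgroup of Y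
    (∃ L : AddSubgroup ℚ, (L : Set ℚ) = H ∪ H₁ ∧ L ≤ Y) ∧
    -- (2) f is positive definite with f(0) = 1
    (IsPositiveDefinite (fun y : Y => (f y : ℂ)) ∧ f 0 = 1) ∧
    -- (3) f satisfies the functional equation, with coefficients that are
    -- automorphisms of Y whose squares sum to 1
    (ratSMul ((p : ℚ) / (q : ℚ) ^ a) Y = (Y : Set ℚ) ∧
      ratSMul (1 / (q : ℚ) ^ a) Y = (Y : Set ℚ) ∧
      (b : ℚ) * ((p : ℚ) / (q : ℚ) ^ a) ^ 2 + (1 / (q : ℚ) ^ a) ^ 2 = 1 ∧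
      ∀ y : Y, f y = (f ⟨((p : ℚ) / (q : ℚ) ^ a) * (y : ℚ), hm1 y⟩) ^ b *
        f ⟨(1 / (q : ℚ) ^ a) * (y : ℚ), hm2 y⟩) ∧
    -- (4) f is not of Gauss–Haar form
    ¬ ∃ (σ : ℝ), 0 ≤ σ ∧ ∃ (E : AddSubgroup ℚ), E ≤ Y ∧
        ∃ (χ : AddChar Y Circle),
          (∀ y : Y, (y : ℚ) ∈ E →
            ((f y : ℂ)) = (χ y : ℂ) * Complex.exp (-(σ : ℂ) * ((y : ℚ) : ℂ) ^ 2)) ∧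
          (∀ y : Y, (y : ℚ) ∉ E → f y = 0) :=
  polya_fails_two_primes_general p q hp hq hpq Y hY hpY hqY a b hab H H₁ hH hH₁ c hc0 hc1 f hf1 hfc
    hf0 hm1 hm2
end

section
/- Let μ be a Borel probability measure on the circle group 𝕋 = ℝ/ℤ, let n ≥ 2, and let ε_1, …, ε_n ∈ {−1, 1}. If the pushforward of the product measure μ^{⊗n} under the map (x_1, …, x_n) ↦ ε_1x_1 + ⋯ + ε_nx_n equals μ, then there exist an element x ∈ 𝕋 and a closed subgroup K of 𝕋 such that μ is the translate by x of the Haar probability measure of K (viewed as a measure on 𝕋 supported on the coset x + K). -/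
open MeasureTheory
open scoped BigOperators

/-!
Write `μ̂ m = ∫ e_m dμ` for the Fourier–Stieltjes coefficients of `μ`. Independence turns the
hypothesis into `μ̂ m = ∏ⱼ μ̂ (εⱼ m)`, and `μ̂ (-m)` is the conjugate of `μ̂ m`, so
`‖μ̂ m‖ = ‖μ̂ m‖ ^ n`: every coefficient has modulus `0` or `1`. Equality in `‖∫ e_m dμ‖ ≤ 1` forces
`e_m` to be `μ`-a.e. constant, hence the frequencies of modulus one form a subgroup `dℤ` of `ℤ`.
Translating `μ` by `-x`, where `e_d x = μ̂ d`, gives a measure `ν` with `ν̂ d = 1`, so `ν` lives on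
`K = {z | d • z = 0}`; its coefficients vanish off `dℤ`, and the characters `e_{jd}` are trivial on
`K`, so `ν` is `K`-invariant.
-/

lemma eq_zero_or_eq_one_of_pow_eq_self {R : Type*} [Field R] [LinearOrder R] [IsStrictOrderedRing R]
    {r : R} (hr : 0 ≤ r) {n : ℕ} (hn : 2 ≤ n) (h : r ^ n = r) : r = 0 ∨ r = 1 := by
  refine or_iff_not_imp_left.2 fun hr0 => (pow_eq_one_iff_of_nonneg hr (by omega : n - 1 ≠ 0)).1 ?_
  apply mul_right_cancel₀ hr0
  rw [← pow_succ, Nat.sub_add_cancel (by omega), h, one_mul]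

namespace AddCircle

open ComplexConjugate

variable {T : ℝ}

noncomputable def fourierStieltjes (μ : Measure (AddCircle T)) (m : ℤ) : ℂ :=
  ∫ x, fourier m x ∂μ

lemma fourier_add_apply (m : ℤ) (x y : AddCircle T) :
    fourier m (x + y) = fourier m x * fourier m y := by
  simp only [fourier_apply, smul_add, toCircle_add, Circle.coe_mul]

lemma fourier_sum {ι : Type*} (m : ℤ) (s : Finset ι) (y : ι → AddCircle T) :
    fourier m (∑ j ∈ s, y j) = ∏ j ∈ s, fourier m (y j) := by
  classical
  induction s using Finset.induction_on with
  | empty => simp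
  | insert a s ha ih => rw [Finset.sum_insert ha, Finset.prod_insert ha, fourier_add_apply, ih]

lemma fourier_zsmul (m k : ℤ) (x : AddCircle T) : fourier m (k • x) = fourier (m * k) x := by
  simp only [fourier_apply, mul_zsmul]

lemma fourier_eq_one_iff (hT : T ≠ 0) {m : ℤ} {x : AddCircle T} :
    fourier m x = 1 ↔ m • x = 0 := by
  rw [fourier_apply, ← (injective_toCircle hT).eq_iff, toCircle_zero, ← Circle.coe_inj,
    Circle.coe_one]

variable (μ : Measure (AddCircle T))

lemma fourierStieltjes_zero [IsProbabilityMeasure μ] : fourierStieltjes μ 0 = 1 := by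
  simp [fourierStieltjes]

lemma fourierStieltjes_neg (m : ℤ) :
    fourierStieltjes μ (-m) = conj (fourierStieltjes μ m) := by
  simp only [fourierStieltjes, fourier_neg, integral_conj]

lemma fourierStieltjes_map_add [IsFiniteMeasure μ] (a : AddCircle T) (m : ℤ) :
    fourierStieltjes (μ.map (a + ·)) m = fourier m a * fourierStieltjes μ m := by
  rw [fourierStieltjes, integral_map (measurable_const_add a).aemeasurable
    (map_continuous (fourier m)).aestronglyMeasurable]
  simp only [fourier_add_apply, integral_const_mul, fourierStieltjes]

lemma fourierStieltjes_map_sum_zsmul {ι : Type*} [Fintype ι] [SigmaFinite μ] (ε : ι → ℤ)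
    (m : ℤ) :
    fourierStieltjes ((Measure.pi fun _ : ι => μ).map fun x => ∑ j, ε j • x j) m =
      ∏ j, fourierStieltjes μ (m * ε j) := by
  have hmeas : Measurable fun x : ι → AddCircle T => ∑ j, ε j • x j := by fun_prop
  rw [fourierStieltjes, integral_map hmeas.aemeasurable
    (map_continuous (fourier m)).aestronglyMeasurable]
  simp only [fourier_sum, fourier_zsmul]
  exact integral_fintype_prod_eq_prod fun j => fourier (m * ε j)

lemma ae_fourier_eq_fourierStieltjes [IsProbabilityMeasure μ] {m : ℤ}
    (h : ‖fourierStieltjes μ m‖ = 1) : ∀ᵐ x ∂μ, fourier m x = fourierStieltjes μ m := by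
  refine (ae_eq_const_or_norm_integral_lt_of_norm_le_const (f := fun x => (fourier m x : ℂ))
    (C := 1) (Filter.Eventually.of_forall fun x => (Circle.norm_coe _).le)).resolve_right ?_
    |>.mono ?_
  · simpa [fourierStieltjes] using h.ge
  · intro x hx
    simpa [average_eq_integral, fourierStieltjes] using hx

lemma fourierStieltjes_add_of_norm_eq_one [IsProbabilityMeasure μ] {a : ℤ}
    (ha : ‖fourierStieltjes μ a‖ = 1) (b : ℤ) :
    fourierStieltjes μ (a + b) = fourierStieltjes μ a * fourierStieltjes μ b := by
  change ∫ x, fourier (a + b) x ∂μ = _ * ∫ x, fourier b x ∂μ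
  rw [← integral_const_mul]
  refine integral_congr_ae ((ae_fourier_eq_fourierStieltjes μ ha).mono fun x hx => ?_)
  simp only [fourier_add, hx]

def unimodularFrequencies [IsProbabilityMeasure μ] : AddSubgroup ℤ where
  carrier := {m | ‖fourierStieltjes μ m‖ = 1}
  zero_mem' := by simp [fourierStieltjes_zero]
  add_mem' {a b} ha hb := by simp_all [fourierStieltjes_add_of_norm_eq_one μ ha]
  neg_mem' {a} ha := by simp_all [fourierStieltjes_neg]

theorem fourierStieltjes_eq_zero_or_norm_eq_one [IsProbabilityMeasure μ] {ι : Type*} [Fintype ι]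
    (hι : 2 ≤ Fintype.card ι) {ε : ι → ℤ} (hε : ∀ j, ε j = 1 ∨ ε j = -1)
    (heq : (Measure.pi fun _ : ι => μ).map (fun x => ∑ j, ε j • x j) = μ) (m : ℤ) :
    fourierStieltjes μ m = 0 ∨ ‖fourierStieltjes μ m‖ = 1 := by
  have hsign (j : ι) : ‖fourierStieltjes μ (m * ε j)‖ = ‖fourierStieltjes μ m‖ := by
    rcases hε j with h | h <;> simp [h, fourierStieltjes_neg]
  have hpow : ‖fourierStieltjes μ m‖ ^ Fintype.card ι = ‖fourierStieltjes μ m‖ := by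
    conv_rhs => rw [← heq, fourierStieltjes_map_sum_zsmul, norm_prod]
    simp [hsign]
  exact (eq_zero_or_eq_one_of_pow_eq_self (norm_nonneg _) hι hpow).imp norm_eq_zero.1 id

variable [hT : Fact (0 < T)]

lemma integral_eq_of_fourierStieltjes_eq {μ ν : Measure (AddCircle T)} [IsFiniteMeasure μ]
    [IsFiniteMeasure ν] (h : fourierStieltjes μ = fourierStieltjes ν) (f : C(AddCircle T, ℂ)) :
    ∫ x, f x ∂μ = ∫ x, f x ∂ν := by
  let I (ρ : Measure (AddCircle T)) [IsFiniteMeasure ρ] : C(AddCircle T, ℂ) →L[ℂ] ℂ :=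
    L1.integralCLM' ℂ ∘L ContinuousMap.toLp 1 ρ ℂ
  have hI (ρ : Measure (AddCircle T)) [IsFiniteMeasure ρ] (f : C(AddCircle T, ℂ)) :
      I ρ f = ∫ x, f x ∂ρ := by
    rw [← integral_congr_ae (ContinuousMap.coeFn_toLp (p := 1) (𝕜 := ℂ) ρ f),
      ← L1.integral_eq_integral, L1.integral_eq' ℂ]
    rfl
  have hdense : Dense (Submodule.span ℂ (Set.range (fourier (T := T))) : Set C(AddCircle T, ℂ)) :=
    Submodule.dense_iff_topologicalClosure_eq_top.2 span_fourier_closure_eq_top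
  have hIeq := ContinuousLinearMap.ext_on hdense (f := I μ) (g := I ν) (by
    rintro _ ⟨m, rfl⟩
    rw [hI, hI]
    exact congr_fun h m)
  simpa only [hI] using congr($hIeq f)

lemma ext_of_fourierStieltjes_eq {μ ν : Measure (AddCircle T)} [IsFiniteMeasure μ]
    [IsFiniteMeasure ν] (h : fourierStieltjes μ = fourierStieltjes ν) : μ = ν := by
  refine ext_of_forall_integral_eq_of_IsFiniteMeasure fun f => ?_
  have := integral_eq_of_fourierStieltjes_eq h
    ((ContinuousMap.mk _ Complex.continuous_ofReal).comp f.toContinuousMap)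
  simp only [ContinuousMap.comp_apply, ContinuousMap.coe_mk] at this
  exact_mod_cast this

lemma map_add_eq_self_of_fourierStieltjes_eq_zero {ν : Measure (AddCircle T)} [IsFiniteMeasure ν]
    {d : ℤ} (hν : ∀ m ∉ AddSubgroup.zmultiples d, fourierStieltjes ν m = 0) {k : AddCircle T}
    (hk : d • k = 0) : ν.map (k + ·) = ν := by
  refine ext_of_fourierStieltjes_eq (funext fun m => ?_)
  rw [fourierStieltjes_map_add]
  by_cases hm : m ∈ AddSubgroup.zmultiples d
  · obtain ⟨j, rfl⟩ := hm
    rw [(fourier_eq_one_iff hT.out.ne').2 (by simp only [smul_eq_mul, mul_zsmul, hk, smul_zero]),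
      one_mul]
  · rw [hν m hm, mul_zero]

lemma measure_ker_zsmul_eq_one {ν : Measure (AddCircle T)} [IsProbabilityMeasure ν] {d : ℤ}
    (hν : fourierStieltjes ν d = 1) :
    ν ((zsmulAddGroupHom (α := AddCircle T) d).ker : Set (AddCircle T)) = 1 := by
  have hae : ∀ᵐ x ∂ν, d • x = 0 :=
    (ae_fourier_eq_fourierStieltjes ν (by simp [hν])).mono fun x hx =>
      (fourier_eq_one_iff hT.out.ne').1 (hx.trans hν)
  rw [← measure_univ (μ := ν)]
  exact (ae_iff_measure_eq
    (isClosed_singleton.preimage (continuous_zsmul d)).nullMeasurableSet).1 hae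

end AddCircle

open AddCircle

/-- The generalized Pólya theorem on the circle group `𝕋 = ℝ/ℤ` (Remark 2.13): if `μ` is a
probability measure on `𝕋` and `ξ₁` and `ε₁ξ₁ + ⋯ + εₙξₙ` (with `εⱼ = ±1`) are
identically distributed for i.i.d. `ξⱼ` with distribution `μ`, then `μ` is a shift of the
Haar probability measure of a closed (hence compact) subgroup `K` of `𝕋`. -/
theorem generalized_polya_circle
    (μ : Measure (AddCircle (1 : ℝ))) [IsProbabilityMeasure μ]
    (n : ℕ) (hn : 2 ≤ n) (ε : Fin n → ℤ) (hε : ∀ j, ε j = 1 ∨ ε j = -1)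
    (heq : Measure.map (fun x : Fin n → AddCircle (1 : ℝ) => ∑ j, ε j • x j)
      (Measure.pi fun _ : Fin n => μ) = μ) :
    ∃ (x : AddCircle (1 : ℝ)) (K : AddSubgroup (AddCircle (1 : ℝ))),
      IsClosed (K : Set (AddCircle (1 : ℝ))) ∧
      ∃ ν : Measure (AddCircle (1 : ℝ)), IsProbabilityMeasure ν ∧
        ν (K : Set (AddCircle (1 : ℝ))) = 1 ∧
        (∀ k ∈ K, Measure.map (fun z => k + z) ν = ν) ∧
        μ = Measure.map (fun z => x + z) ν := by
  have hdich := fourierStieltjes_eq_zero_or_norm_eq_one μ (by simpa using hn) hε heq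
  obtain ⟨d, hd⟩ := Int.subgroup_cyclic (unimodularFrequencies μ)
  rw [← AddSubgroup.zmultiples_eq_closure] at hd
  have hdμ : ‖fourierStieltjes μ d‖ = 1 :=
    show d ∈ unimodularFrequencies μ from hd ▸ AddSubgroup.mem_zmultiples d
  obtain ⟨x, hx⟩ := (ae_fourier_eq_fourierStieltjes μ hdμ).exists
  set ν := μ.map (-x + ·)
  have hνprob : IsProbabilityMeasure ν := Measure.isProbabilityMeasure_map (by fun_prop)
  have hν (m : ℤ) : fourierStieltjes ν m = fourier m (-x) * fourierStieltjes μ m :=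
    fourierStieltjes_map_add μ (-x) m
  refine ⟨x, (zsmulAddGroupHom (α := AddCircle 1) d).ker,
    isClosed_singleton.preimage (continuous_zsmul d), ν, hνprob, measure_ker_zsmul_eq_one ?_,
    fun k hk => map_add_eq_self_of_fourierStieltjes_eq_zero (fun m hm => ?_) hk, ?_⟩
  · rw [hν, ← hx, ← fourier_add_apply, neg_add_cancel, fourier_eval_zero]
  · rw [hν, (hdich m).resolve_right fun h => hm (hd ▸ h), mul_zero]
  · rw [Measure.map_map (by fun_prop) (by fun_prop)]
    simp [Function.comp_def]
end
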